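/- arXiv:1906.11372 — 17 statements merged into one kernel-verified Lean document; each statement's English description precedes it below -/
import Mathlib

section
/- Let (q̃, p̃) maximize the aggregate consumer surplus Σ_i (v_i(q_i) − q_i·p) over all pairs (q, p), where q ∈ ℝ^N has q_i ≥ 0 for all i and p ∈ ℝ, subject to the budget constraint C(‖q‖) − ‖q‖·p ≤ 0 and the consumer-optimality constraints q_i·(v_i'(q_i) − p) = 0 for every i. If ‖q̃‖ > 0 and each v_i is in addition strictly concave and twice continuously differentiable, then the budget constraint binds at the maximizer: C(‖q̃‖) = ‖q̃‖·p̃; that is, the surplus-maximizing price equals the average cost, p̃ = C(‖q̃‖)/‖q̃‖. -/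
open Finset Set

set_option maxHeartbeats 1000000

/-- At a maximizer `(q̃, p̃)` of the aggregate consumer surplus
`Σ_i (v_i(q_i) − q_i·p)` subject to the budget constraint `C(‖q‖) − ‖q‖·p ≤ 0`
and the consumer-optimality constraints `q_i·(v_i'(q_i) − p) = 0`, with
`‖q̃‖ > 0`, the budget constraint binds: `C(‖q̃‖) = ‖q̃‖·p̃`, i.e. the
surplus-maximizing price equals the average cost. -/
theorem statement_0
    (N : ℕ) (v v' : Fin N → ℝ → ℝ) (C : ℝ → ℝ)
    (hv_deriv : ∀ i x, HasDerivAt (v i) (v' i x) x)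
    (hv_smooth : ∀ i, ContDiff ℝ 2 (v i))
    (hv_sconcave : ∀ i, StrictConcaveOn ℝ (Ici (0 : ℝ)) (v i))
    (hv_mono : ∀ i, MonotoneOn (v i) (Ici (0 : ℝ)))
    (hv0 : ∀ i, v i 0 = 0)
    (hC_diff : DifferentiableOn ℝ C (Ici (0 : ℝ)))
    (hC_sconvex : StrictConvexOn ℝ (Ici (0 : ℝ)) C)
    (hC0 : C 0 = 0)
    (hCpos : ∀ g : ℝ, 0 < g → 0 < C g)
    (hp_mono : MonotoneOn (fun g => C g / g) (Ioi (0 : ℝ)))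
    (qt : Fin N → ℝ) (pt : ℝ)
    (hqt_nonneg : ∀ i, 0 ≤ qt i)
    (hqt_budget : C (∑ i, qt i) - (∑ i, qt i) * pt ≤ 0)
    (hqt_foc : ∀ i, qt i * (v' i (qt i) - pt) = 0)
    (hqt_max : ∀ (q : Fin N → ℝ) (p : ℝ),
        (∀ i, 0 ≤ q i) →
        C (∑ i, q i) - (∑ i, q i) * p ≤ 0 →
        (∀ i, q i * (v' i (q i) - p) = 0) →
        ∑ i, (v i (q i) - q i * p) ≤ ∑ i, (v i (qt i) - qt i * pt))
    (hqt_total_pos : 0 < ∑ i, qt i) :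
    C (∑ i, qt i) = (∑ i, qt i) * pt ∧ pt = C (∑ i, qt i) / (∑ i, qt i) := by
  classical
  set S := ∑ i, qt i with hS_def
  have hS : 0 < S := hqt_total_pos
  have deriv_eq : ∀ i, deriv (v i) = v' i := fun i => funext fun x => (hv_deriv i x).deriv
  have hanti : ∀ i, StrictAntiOn (v' i) (Ici (0 : ℝ)) := by
    intro i
    have h := (hv_sconcave i).strictAntiOn_deriv (fun x _ => (hv_deriv i x).differentiableAt)
    rwa [deriv_eq i] at h
  have hcont : ∀ i, Continuous (v' i) := by
    intro i
    have h := (hv_smooth i).continuous_deriv (by norm_num)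
    rwa [deriv_eq i] at h
  have htan : ∀ i (x y : ℝ), 0 ≤ x → x < y → v' i y * (y - x) ≤ v i y - v i x := by
    intro i x y hx hxy
    have h := ((hv_sconcave i).concaveOn).le_slope_of_hasDerivAt (mem_Ici.2 hx)
      (mem_Ici.2 (by linarith)) hxy (hv_deriv i y)
    rw [slope_def_field] at h
    have hxy' : (0 : ℝ) < y - x := by linarith
    calc v' i y * (y - x) ≤ (v i y - v i x) / (y - x) * (y - x) :=
          mul_le_mul_of_nonneg_right h hxy'.le
      _ = v i y - v i x := by field_simp
  have key : C S = S * pt := by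
    by_contra hne
    have hc : 0 < S * pt - C S := by
      rcases lt_or_eq_of_le hqt_budget with h | h
      · linarith
      · exact absurd (by linarith : C S = S * pt) hne
    set c := S * pt - C S with hc_def
    obtain ⟨i0, hi0⟩ : ∃ i, 0 < qt i := by
      by_contra h
      push_neg at h
      have : S ≤ 0 := Finset.sum_nonpos (fun i _ => h i)
      linarith
    have hNR : (0 : ℝ) < N := by
      have : 0 < N := Fin.pos_iff_nonempty.mpr ⟨i0⟩
      exact_mod_cast this
    have hfoc : ∀ i, 0 < qt i → v' i (qt i) = pt := by
      intro i hi
      rcases mul_eq_zero.mp (hqt_foc i) with h | h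
      · exact absurd h (ne_of_gt hi)
      · linarith
    -- Convexity bound for C on [S, S+N]
    set B : ℝ := S + N + 1 with hB_def
    set K : ℝ := (C B - C S) / (N + 1) with hK_def
    have hCbound : ∀ x : ℝ, S ≤ x → x ≤ S + N → C x ≤ C S + K * (x - S) := by
      intro x hx1 hx2
      rcases eq_or_lt_of_le hx1 with rfl | hx
      · simp
      · have hBgt : S < B := by rw [hB_def]; linarith
        have hsec := hC_sconvex.convexOn.secant_mono (a := S) (x := x) (y := B)
          (mem_Ici.2 hS.le) (mem_Ici.2 (by linarith)) (mem_Ici.2 (by linarith))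
          (ne_of_gt hx) (ne_of_gt hBgt) (by rw [hB_def]; linarith)
        have hBS : B - S = (N : ℝ) + 1 := by rw [hB_def]; ring
        rw [hBS] at hsec
        have hxS : (0 : ℝ) < x - S := by linarith
        have := mul_le_mul_of_nonneg_right hsec hxS.le
        rw [div_mul_cancel₀ _ (ne_of_gt hxS)] at this
        calc C x = C S + (C x - C S) := by ring
          _ ≤ C S + K * (x - S) := by
              rw [hK_def]; linarith
    set A : ℝ := |K| + |pt| + 1 with hA_def
    have hA : 0 < A := by positivity
    set δ : ℝ := min 1 (c / (2 * N * A)) with hδ_def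
    have h2NA : (0 : ℝ) < 2 * N * A := by positivity
    have hδpos : 0 < δ := lt_min one_pos (div_pos hc h2NA)
    have hδ1 : δ ≤ 1 := min_le_left _ _
    have hδ2 : δ ≤ c / (2 * N * A) := min_le_right _ _
    -- minimum of the derivative drops
    have huniv : (Finset.univ : Finset (Fin N)).Nonempty := ⟨i0, Finset.mem_univ i0⟩
    set M : ℝ := Finset.univ.inf' huniv (fun i => v' i (qt i) - v' i (qt i + δ)) with hM_def
    have hM : 0 < M := by
      rw [hM_def, Finset.lt_inf'_iff]
      intro i _
      have := hanti i (mem_Ici.2 (hqt_nonneg i)) (mem_Ici.2 (by linarith [hqt_nonneg i]))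
        (by linarith : qt i < qt i + δ)
      linarith
    set Aset : Finset (Fin N) := Finset.univ.filter (fun i => 0 < qt i) with hAset_def
    have hAne : Aset.Nonempty := ⟨i0, by simp [hAset_def, hi0]⟩
    set E : ℝ := Aset.inf' hAne (fun i => pt - v' i (qt i + 1)) with hE_def
    have hE : 0 < E := by
      rw [hE_def, Finset.lt_inf'_iff]
      intro i hi
      have hiq : 0 < qt i := by
        rw [hAset_def] at hi
        exact (Finset.mem_filter.mp hi).2
      have := hanti i (mem_Ici.2 (hqt_nonneg i)) (mem_Ici.2 (by linarith [hqt_nonneg i]))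
        (by linarith : qt i < qt i + 1)
      rw [hfoc i hiq] at this
      linarith
    set ε : ℝ := min (min M E) (c / (2 * (S + N))) / 2 with hε_def
    have hSN : (0 : ℝ) < S + N := by linarith
    have hεpos : 0 < ε := by
      rw [hε_def]
      have := lt_min (lt_min hM hE) (div_pos hc (by linarith : (0:ℝ) < 2 * (S + N)))
      linarith
    have hεM : ε < M := by
      have h1 : min (min M E) (c / (2 * (S + N))) ≤ M := le_trans (min_le_left _ _) (min_le_left _ _)
      rw [hε_def]; linarith
    have hεE : ε < E := by
      have h1 : min (min M E) (c / (2 * (S + N))) ≤ E :=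
        le_trans (min_le_left _ _) (min_le_right _ _)
      rw [hε_def]; linarith
    have hεc : ε ≤ c / (2 * (S + N)) := by
      have h1 : min (min M E) (c / (2 * (S + N))) ≤ c / (2 * (S + N)) := min_le_right _ _
      have h2 : 0 < c / (2 * (S + N)) := div_pos hc (by linarith)
      rw [hε_def]; linarith
    -- per-consumer construction
    have hex : ∀ i, ∃ x, qt i ≤ x ∧ x ≤ qt i + δ ∧ x * (v' i x - (pt - ε)) = 0 ∧
        v i (qt i) - qt i * pt + ε * qt i ≤ v i x - x * (pt - ε) := by
      intro i
      rcases eq_or_lt_of_le (hqt_nonneg i) with h0 | h0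
      · refine ⟨0, le_of_eq h0.symm, by linarith, by ring, ?_⟩
        rw [← h0]; norm_num
      · -- active consumer
        have hiA : i ∈ Aset := by simp [hAset_def, h0]
        have hEi : E ≤ pt - v' i (qt i + 1) := Finset.inf'_le _ hiA
        have hMi : M ≤ v' i (qt i) - v' i (qt i + δ) := Finset.inf'_le _ (Finset.mem_univ i)
        have hfi : v' i (qt i) = pt := hfoc i h0
        have hivt := intermediate_value_Icc' (by linarith : qt i ≤ qt i + 1)
          ((hcont i).continuousOn)
        have hmem : pt - ε ∈ Icc (v' i (qt i + 1)) (v' i (qt i)) := by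
          constructor
          · linarith
          · rw [hfi]; linarith
        obtain ⟨x, hx, hvx⟩ := hivt hmem
        obtain ⟨hx1, hx2⟩ := hx
        have hxδ : x ≤ qt i + δ := by
          by_contra h
          push_neg at h
          have := hanti i (mem_Ici.2 (by linarith [hqt_nonneg i] : (0:ℝ) ≤ qt i + δ))
            (mem_Ici.2 (by linarith [hqt_nonneg i] : (0:ℝ) ≤ x)) h
          rw [hvx] at this
          linarith
        have hxgt : qt i < x := by
          rcases eq_or_lt_of_le hx1 with rfl | h
          · rw [hfi] at hvx; linarith
          · exact h
        refine ⟨x, hx1, hxδ, by rw [hvx]; ring, ?_⟩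
        have htan' := htan i (qt i) x (hqt_nonneg i) hxgt
        rw [hvx] at htan'
        nlinarith
    choose q hq1 hq2 hq3 hq4 using hex
    have hq_nonneg : ∀ i, 0 ≤ q i := fun i => le_trans (hqt_nonneg i) (hq1 i)
    set T := ∑ i, q i with hT_def
    have hT1 : S ≤ T := Finset.sum_le_sum (fun i _ => hq1 i)
    have hT2 : T ≤ S + N * δ := by
      have h := Finset.sum_le_sum (fun i (_ : i ∈ Finset.univ) => hq2 i)
      have hsum : ∑ i : Fin N, (qt i + δ) = S + N * δ := by
        rw [Finset.sum_add_distrib, Finset.sum_const, Finset.card_univ, Fintype.card_fin,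
          nsmul_eq_mul]
      rw [hsum] at h
      exact h
    have hTN : T ≤ S + N := by
      have := mul_le_mul_of_nonneg_left hδ1 hNR.le
      linarith
    -- budget constraint for the new profile
    have hbudget : C T - T * (pt - ε) ≤ 0 := by
      have h1 : C T ≤ C S + K * (T - S) := hCbound T hT1 hTN
      have hΔ0 : (0 : ℝ) ≤ T - S := by linarith
      have hΔ : T - S ≤ N * δ := by linarith
      have hstep : K * (T - S) - pt * (T - S) ≤ A * (N * δ) := by
        nlinarith [mul_nonneg (sub_nonneg.2 (le_abs_self K)) hΔ0,
          mul_nonneg (by linarith [neg_abs_le pt] : (0:ℝ) ≤ |pt| + pt) hΔ0,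
          mul_nonneg hA.le (by linarith : (0:ℝ) ≤ N * δ - (T - S))]
      have h3 : A * (N * δ) ≤ c / 2 := by
        have h := mul_le_mul_of_nonneg_left hδ2 (by positivity : (0:ℝ) ≤ A * N)
        have heq : A * N * (c / (2 * N * A)) = c / 2 := by
          field_simp
        calc A * (N * δ) = A * N * δ := by ring
          _ ≤ A * N * (c / (2 * N * A)) := h
          _ = c / 2 := heq
      have hTε : T * ε ≤ c / 2 := by
        have h4 : T * ε ≤ (S + N) * ε := mul_le_mul_of_nonneg_right hTN hεpos.le
        have h5 : (S + N) * ε ≤ (S + N) * (c / (2 * (S + N))) :=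
          mul_le_mul_of_nonneg_left hεc hSN.le
        have h6 : (S + N) * (c / (2 * (S + N))) = c / 2 := by
          field_simp
        linarith
      nlinarith
    have hmax := hqt_max q (pt - ε) hq_nonneg hbudget hq3
    have hsplit : ∑ i, (v i (qt i) - qt i * pt + ε * qt i)
        = (∑ i, (v i (qt i) - qt i * pt)) + ε * S := by
      rw [Finset.sum_add_distrib, ← Finset.mul_sum]
    have hsum_ge := Finset.sum_le_sum (fun i (_ : i ∈ Finset.univ) => hq4 i)
    rw [hsplit] at hsum_ge
    have hεS : 0 < ε * S := mul_pos hεpos hS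
    linarith
  refine ⟨key, ?_⟩
  rw [key]
  exact (mul_div_cancel_left₀ pt hS.ne').symm
end

section
/- Assume each v_i is strictly concave (so v_i' is strictly decreasing on [0,∞)). Call a profile q ≥ 0 with ‖q‖ > 0 a non-strategic equilibrium under average-cost pricing if for every i, v_i'(q_i) ≤ p(‖q‖), with equality whenever q_i > 0. Then the non-strategic equilibrium under average-cost pricing is unique: if q̃ and q̂ are both non-strategic equilibria, then q̃ = q̂. -/
/-!
Average-cost pricing turns the price into a non-decreasing function of total demand, while each
marginal valuation is strictly decreasing. So if one equilibrium has the smaller total demand, it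
faces the lower price, and every consumer active in the other equilibrium demands at least as much
in this one; the smaller total then forces the two profiles to coincide.
-/

open Finset Set

/-- A non-strategic equilibrium under the pricing rule `p`, for consumers with marginal
valuations `v'`. -/
structure IsAvgCostEquilibrium {ι : Type*} [Fintype ι] (v' : ι → ℝ → ℝ) (p : ℝ → ℝ)
    (q : ι → ℝ) : Prop where
  nonneg : ∀ i, 0 ≤ q i
  sum_pos : 0 < ∑ i, q i
  marginal_le : ∀ i, v' i (q i) ≤ p (∑ i, q i)
  marginal_eq : ∀ i, 0 < q i → v' i (q i) = p (∑ i, q i)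

namespace IsAvgCostEquilibrium

variable {ι : Type*} [Fintype ι] {v' : ι → ℝ → ℝ} {p : ℝ → ℝ} {a b : ι → ℝ}

theorem le_of_sum_le (hv' : ∀ i, StrictAntiOn (v' i) (Ici 0)) (hp : MonotoneOn p (Ioi 0))
    (ha : IsAvgCostEquilibrium v' p a) (hb : IsAvgCostEquilibrium v' p b)
    (hsum : ∑ i, a i ≤ ∑ i, b i) : b ≤ a := by
  intro i
  by_contra! hlt
  have hbi : 0 < b i := (ha.nonneg i).trans_lt hlt
  have hmarginal : v' i (b i) < v' i (a i) :=
    hv' i (mem_Ici.2 (ha.nonneg i)) (mem_Ici.2 hbi.le) hlt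
  have hprice : p (∑ i, a i) ≤ p (∑ i, b i) := hp ha.sum_pos hb.sum_pos hsum
  linarith [ha.marginal_le i, hb.marginal_eq i hbi]

theorem eq_of_sum_le (hv' : ∀ i, StrictAntiOn (v' i) (Ici 0)) (hp : MonotoneOn p (Ioi 0))
    (ha : IsAvgCostEquilibrium v' p a) (hb : IsAvgCostEquilibrium v' p b)
    (hsum : ∑ i, a i ≤ ∑ i, b i) : a = b := by
  have hba : b ≤ a := ha.le_of_sum_le hv' hp hb hsum
  exact (eq_of_le_of_not_lt hba fun hlt => (Fintype.sum_strictMono hlt).not_ge hsum).symm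

theorem unique (hv' : ∀ i, StrictAntiOn (v' i) (Ici 0)) (hp : MonotoneOn p (Ioi 0))
    (ha : IsAvgCostEquilibrium v' p a) (hb : IsAvgCostEquilibrium v' p b) : a = b := by
  rcases le_total (∑ i, a i) (∑ i, b i) with hsum | hsum
  · exact ha.eq_of_sum_le hv' hp hb hsum
  · exact (hb.eq_of_sum_le hv' hp ha hsum).symm

end IsAvgCostEquilibrium

theorem statement_1_general
    (N : ℕ) (v v' : Fin N → ℝ → ℝ)
    (hv_deriv : ∀ i x, HasDerivAt (v i) (v' i x) x)
    (hv_sconcave : ∀ i, StrictConcaveOn ℝ (Ici (0 : ℝ)) (v i))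
    (p : ℝ → ℝ)
    (hp_mono : MonotoneOn p (Ioi (0 : ℝ)))
    (qt qh : Fin N → ℝ)
    (hqt_nonneg : ∀ i, 0 ≤ qt i) (hqt_pos : 0 < ∑ i, qt i)
    (hqt_le : ∀ i, v' i (qt i) ≤ p (∑ i, qt i))
    (hqt_eq : ∀ i, 0 < qt i → v' i (qt i) = p (∑ i, qt i))
    (hqh_nonneg : ∀ i, 0 ≤ qh i) (hqh_pos : 0 < ∑ i, qh i)
    (hqh_le : ∀ i, v' i (qh i) ≤ p (∑ i, qh i))
    (hqh_eq : ∀ i, 0 < qh i → v' i (qh i) = p (∑ i, qh i)) :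
    qt = qh := by
  have hv' : ∀ i, StrictAntiOn (v' i) (Ici 0) := fun i => by
    have hderiv : deriv (v i) = v' i := funext fun x => (hv_deriv i x).deriv
    exact hderiv ▸ (hv_sconcave i).strictAntiOn_deriv fun x _ => (hv_deriv i x).differentiableAt
  exact IsAvgCostEquilibrium.unique hv' hp_mono ⟨hqt_nonneg, hqt_pos, hqt_le, hqt_eq⟩
    ⟨hqh_nonneg, hqh_pos, hqh_le, hqh_eq⟩

/-- With strictly concave valuations, the non-strategic
equilibrium under average-cost pricing (every consumer's marginal valuation
is at most the price, with equality at positive demand) is unique. -/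
theorem statement_1
    (N : ℕ) (v v' : Fin N → ℝ → ℝ) (C : ℝ → ℝ)
    (hv_deriv : ∀ i x, HasDerivAt (v i) (v' i x) x)
    (hv_sconcave : ∀ i, StrictConcaveOn ℝ (Ici (0 : ℝ)) (v i))
    (hv_mono : ∀ i, MonotoneOn (v i) (Ici (0 : ℝ)))
    (hv0 : ∀ i, v i 0 = 0)
    (hC_diff : DifferentiableOn ℝ C (Ici (0 : ℝ)))
    (hC_sconvex : StrictConvexOn ℝ (Ici (0 : ℝ)) C)
    (hC0 : C 0 = 0)
    (hCpos : ∀ g : ℝ, 0 < g → 0 < C g)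
    (p : ℝ → ℝ) (hp : ∀ g : ℝ, 0 < g → p g = C g / g)
    (hp_mono : MonotoneOn p (Ioi (0 : ℝ)))
    (qt qh : Fin N → ℝ)
    (hqt_nonneg : ∀ i, 0 ≤ qt i) (hqt_pos : 0 < ∑ i, qt i)
    (hqt_le : ∀ i, v' i (qt i) ≤ p (∑ i, qt i))
    (hqt_eq : ∀ i, 0 < qt i → v' i (qt i) = p (∑ i, qt i))
    (hqh_nonneg : ∀ i, 0 ≤ qh i) (hqh_pos : 0 < ∑ i, qh i)
    (hqh_le : ∀ i, v' i (qh i) ≤ p (∑ i, qh i))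
    (hqh_eq : ∀ i, 0 < qh i → v' i (qh i) = p (∑ i, qh i)) :
    qt = qh :=
  statement_1_general N v v' hv_deriv hv_sconcave p hp_mono qt qh hqt_nonneg hqt_pos hqt_le hqt_eq
    hqh_nonneg hqh_pos hqh_le hqh_eq
end

section
/- Let p be differentiable on (0,∞) with p'(g) ≥ 0 for g > 0. Let μ ≥ 0 satisfy the optimality first-order conditions with ‖μ‖ > 0, and let ξ ≥ 0 satisfy the Nash-equilibrium first-order conditions with ‖ξ‖ > 0. Then the total demand at the Nash equilibrium is at least the optimal total demand: ‖μ‖ ≤ ‖ξ‖. -/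
open Finset Set

/-! If the Nash total `S` fell short of the optimal total `T`, some consumer would have
`ξ i < μ i`, hence `μ i > 0`. Concavity of `v i` and strict convexity of `C` then give
`C' S < C' T = v_i'(μ i) ≤ v_i'(ξ i) ≤ p S + ξ i * p' S ≤ p S + S * p' S = C' S`:
a Nash consumer internalises only its own share `ξ i ≤ S` of the price increase. -/

lemma ConcaveOn.antitoneOn_of_hasDerivAt {S : Set ℝ} {f f' : ℝ → ℝ} (hf : ConcaveOn ℝ S f)
    (hd : ∀ x ∈ S, HasDerivAt f (f' x) x) : AntitoneOn f' S := by
  intro x hx y hy hxy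
  simpa only [(hd x hx).deriv, (hd y hy).deriv] using
    hf.antitoneOn_deriv (fun z hz => (hd z hz).differentiableAt) hx hy hxy

lemma StrictConvexOn.strictMonoOn_of_hasDerivAt {S : Set ℝ} {f f' : ℝ → ℝ}
    (hf : StrictConvexOn ℝ S f) (hd : ∀ x ∈ S, HasDerivAt f (f' x) x) : StrictMonoOn f' S := by
  intro x hx y hy hxy
  simpa only [(hd x hx).deriv, (hd y hy).deriv] using
    hf.strictMonoOn_deriv (fun z hz => (hd z hz).differentiableAt) hx hy hxy

theorem statement_2_general
    (N : ℕ) (v v' : Fin N → ℝ → ℝ) (C C' p p' : ℝ → ℝ)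
    (hv_deriv : ∀ i x, HasDerivAt (v i) (v' i x) x)
    (hv_concave : ∀ i, ConcaveOn ℝ (Ici (0 : ℝ)) (v i))
    (hC_deriv : ∀ x : ℝ, 0 ≤ x → HasDerivAt C (C' x) x)
    (hC_sconvex : StrictConvexOn ℝ (Ici (0 : ℝ)) C)
    (hp'_nonneg : ∀ g : ℝ, 0 < g → 0 ≤ p' g)
    (hC'_eq : ∀ g : ℝ, 0 < g → C' g = p g + g * p' g)
    (μ ξ : Fin N → ℝ)
    (hμ_eq : ∀ i, 0 < μ i → v' i (μ i) = C' (∑ j, μ j))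
    (hξ_nonneg : ∀ i, 0 ≤ ξ i) (hξ_pos : 0 < ∑ i, ξ i)
    (hξ_le : ∀ i, v' i (ξ i) ≤ p (∑ j, ξ j) + ξ i * p' (∑ j, ξ j)) :
    (∑ i, μ i) ≤ ∑ i, ξ i := by
  by_contra! hlt
  set S := ∑ j, ξ j
  obtain ⟨i, -, hi⟩ := Finset.exists_lt_of_sum_lt hlt
  have hξi_le : ξ i ≤ S := single_le_sum (fun j _ => hξ_nonneg j) (mem_univ i)
  have hξi_lt := (hξ_nonneg i).trans_lt hi
  have : C' S < C' S := calc
    C' S < C' (∑ j, μ j) := (hC_sconvex.strictMonoOn_of_hasDerivAt fun x hx => hC_deriv x hx)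
        hξ_pos.le (hξ_pos.trans hlt).le hlt
    _ = v' i (μ i) := (hμ_eq i hξi_lt).symm
    _ ≤ v' i (ξ i) := (hv_concave i).antitoneOn_of_hasDerivAt (fun x _ => hv_deriv i x)
        (hξ_nonneg i) hξi_lt.le hi.le
    _ ≤ p S + ξ i * p' S := hξ_le i
    _ ≤ p S + S * p' S := by gcongr; exact hp'_nonneg S hξ_pos
    _ = C' S := (hC'_eq S hξ_pos).symm
  exact lt_irrefl _ this

/-- The total demand at a Nash equilibrium is at least the
optimal total demand: `‖μ‖ ≤ ‖ξ‖`, where `μ` satisfies the optimality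
first-order conditions and `ξ` the Nash-equilibrium first-order conditions. -/
theorem statement_2
    (N : ℕ) (v v' : Fin N → ℝ → ℝ) (C C' p p' : ℝ → ℝ)
    (hv_deriv : ∀ i x, HasDerivAt (v i) (v' i x) x)
    (hv_concave : ∀ i, ConcaveOn ℝ (Ici (0 : ℝ)) (v i))
    (hv_mono : ∀ i, MonotoneOn (v i) (Ici (0 : ℝ)))
    (hv0 : ∀ i, v i 0 = 0)
    (hC_deriv : ∀ x : ℝ, 0 ≤ x → HasDerivAt C (C' x) x)
    (hC_sconvex : StrictConvexOn ℝ (Ici (0 : ℝ)) C)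
    (hC0 : C 0 = 0)
    (hCpos : ∀ g : ℝ, 0 < g → 0 < C g)
    (hp : ∀ g : ℝ, 0 < g → p g = C g / g)
    (hp_mono : MonotoneOn p (Ioi (0 : ℝ)))
    (hp_deriv : ∀ g : ℝ, 0 < g → HasDerivAt p (p' g) g)
    (hp'_nonneg : ∀ g : ℝ, 0 < g → 0 ≤ p' g)
    (hC'_eq : ∀ g : ℝ, 0 < g → C' g = p g + g * p' g)
    (μ ξ : Fin N → ℝ)
    (hμ_nonneg : ∀ i, 0 ≤ μ i) (hμ_pos : 0 < ∑ i, μ i)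
    (hμ_le : ∀ i, v' i (μ i) ≤ C' (∑ j, μ j))
    (hμ_eq : ∀ i, 0 < μ i → v' i (μ i) = C' (∑ j, μ j))
    (hξ_nonneg : ∀ i, 0 ≤ ξ i) (hξ_pos : 0 < ∑ i, ξ i)
    (hξ_le : ∀ i, v' i (ξ i) ≤ p (∑ j, ξ j) + ξ i * p' (∑ j, ξ j))
    (hξ_eq : ∀ i, 0 < ξ i → v' i (ξ i) = p (∑ j, ξ j) + ξ i * p' (∑ j, ξ j)) :
    (∑ i, μ i) ≤ ∑ i, ξ i :=
  statement_2_general N v v' C C' p p' hv_deriv hv_concave hC_deriv hC_sconvex hp'_nonneg hC'_eq μ ξ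
    hμ_eq hξ_nonneg hξ_pos hξ_le
end

section
/- Suppose all N ≥ 1 consumers have the linear valuation v_i(x) = α·x and the price is linear, p(g) = β·g + b, with α > b ≥ 0 and β > 0 (so C(g) = β·g² + b·g and C'(g) = 2β·g + b). Define the symmetric profiles ξ ∈ ℝ^N with ξ_i = (α − b)/(β(N+1)) for all i, and μ ∈ ℝ^N with μ_i = (α − b)/(2βN) for all i. Then: (a) ξ satisfies the Nash-equilibrium first-order conditions and μ satisfies the optimality first-order conditions; and (b) the efficiency ratio equals r(ξ, μ) = 4N/(N+1)², which tends to 0 as N → ∞; in particular the efficiency loss of the Nash equilibrium is arbitrarily large for large populations (the price of anarchy is zero). -/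
/-! With linear valuations every consumer's marginal value is the constant `α`. At the social
optimum it equals the marginal cost `2βg + b`, so the optimal total demand is `(α - b)/(2β)`,
independently of `N`. At the Nash equilibrium each consumer equates `α` with the marginal price
`βg + b + βξᵢ`, which gives the total `N(α - b)/(β(N + 1))`: the larger `N`, the closer the
total demand is to the point `(α - b)/β` where the welfare `g(α - b - βg)` vanishes. The two
welfares are `N(α - b)²/(β(N + 1)²)` and `(α - b)²/(4β)`, whose ratio `4N/(N + 1)²` is at most
`4/(N + 1)`. -/

open Filter Topology

section LinearValuationLinearPrice

variable {α β b n : ℝ}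

theorem nash_share_first_order_condition (hβ : β ≠ 0) (hn : n + 1 ≠ 0) :
    α = (β * (n * ((α - b) / (β * (n + 1)))) + b) + (α - b) / (β * (n + 1)) * β := by
  field_simp
  ring

theorem optimal_share_first_order_condition (hβ : β ≠ 0) (hn : n ≠ 0) :
    α = 2 * β * (n * ((α - b) / (2 * β * n))) + b := by
  field_simp
  ring

theorem nash_share_welfare (hβ : β ≠ 0) (hn : n + 1 ≠ 0) :
    n * (α * ((α - b) / (β * (n + 1)))) -
        n * ((α - b) / (β * (n + 1))) * (β * (n * ((α - b) / (β * (n + 1)))) + b) =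
      n * (α - b) ^ 2 / (β * (n + 1) ^ 2) := by
  field_simp
  ring

theorem optimal_share_welfare (hβ : β ≠ 0) (hn : n ≠ 0) :
    n * (α * ((α - b) / (2 * β * n))) -
        n * ((α - b) / (2 * β * n)) * (β * (n * ((α - b) / (2 * β * n))) + b) =
      (α - b) ^ 2 / (4 * β) := by
  field_simp
  ring

theorem nash_welfare_div_optimal_welfare (hβ : β ≠ 0) (hαb : α - b ≠ 0) :
    n * (α - b) ^ 2 / (β * (n + 1) ^ 2) / ((α - b) ^ 2 / (4 * β)) = 4 * n / (n + 1) ^ 2 := by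
  field_simp

end LinearValuationLinearPrice

theorem four_mul_div_add_one_sq_le {x : ℝ} (hx : 0 ≤ x) :
    4 * x / (x + 1) ^ 2 ≤ 4 * (1 / (x + 1)) := by
  rw [div_le_iff₀ (by positivity)]
  field_simp
  linarith

theorem tendsto_four_mul_natCast_div_add_one_sq :
    Tendsto (fun N : ℕ => 4 * (N : ℝ) / ((N : ℝ) + 1) ^ 2) atTop (𝓝 0) := by
  have h := (tendsto_one_div_add_atTop_nhds_zero_nat (𝕜 := ℝ)).const_mul 4
  rw [mul_zero] at h
  exact squeeze_zero (fun N => by positivity)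
    (fun N => four_mul_div_add_one_sq_le N.cast_nonneg) h

theorem statement_3_general (α β b : ℝ) (hba : b < α) (hβ : 0 < β) :
    (∀ N : ℕ, 1 ≤ N →
      ((∀ _i : Fin N, 0 < (α - b) / (β * ((N : ℝ) + 1))) ∧
       -- Nash-equilibrium first-order conditions for ξ (with v_i' ≡ α, p' ≡ β)
       (∀ i : Fin N,
          α = (β * (∑ _j : Fin N, (α - b) / (β * ((N : ℝ) + 1))) + b)
              + ((α - b) / (β * ((N : ℝ) + 1))) * β) ∧
       (∀ _i : Fin N, 0 < (α - b) / (2 * β * (N : ℝ))) ∧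
       -- optimality first-order conditions for μ (with C'(g) = 2βg + b)
       (∀ i : Fin N,
          α = 2 * β * (∑ _j : Fin N, (α - b) / (2 * β * (N : ℝ))) + b) ∧
       -- the efficiency ratio equals 4N/(N+1)²
       ((∑ _i : Fin N, α * ((α - b) / (β * ((N : ℝ) + 1)))) -
            (∑ _i : Fin N, (α - b) / (β * ((N : ℝ) + 1))) *
              (β * (∑ _i : Fin N, (α - b) / (β * ((N : ℝ) + 1))) + b)) /
         ((∑ _i : Fin N, α * ((α - b) / (2 * β * (N : ℝ)))) -
            (∑ _i : Fin N, (α - b) / (2 * β * (N : ℝ))) *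
              (β * (∑ _i : Fin N, (α - b) / (2 * β * (N : ℝ))) + b))
        = 4 * (N : ℝ) / ((N : ℝ) + 1) ^ 2)) ∧
    Filter.Tendsto (fun N : ℕ => 4 * (N : ℝ) / ((N : ℝ) + 1) ^ 2)
      Filter.atTop (nhds 0) := by
  refine ⟨fun N hN => ?_, tendsto_four_mul_natCast_div_add_one_sq⟩
  have hαb : 0 < α - b := sub_pos.mpr hba
  have hN : (0 : ℝ) < N := by exact_mod_cast hN
  have hN' : (N : ℝ) + 1 ≠ 0 := by positivity
  simp only [Fin.sum_const, nsmul_eq_mul]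
  refine ⟨fun _ => by positivity,
    fun _ => nash_share_first_order_condition hβ.ne' hN',
    fun _ => by positivity,
    fun _ => optimal_share_first_order_condition hβ.ne' hN.ne', ?_⟩
  rw [nash_share_welfare hβ.ne' hN', optimal_share_welfare hβ.ne' hN.ne',
    nash_welfare_div_optimal_welfare hβ.ne' hαb.ne']

/-- With linear valuations `v_i(x) = α·x` and a linear price
`p(g) = β·g + b` (`α > b ≥ 0`, `β > 0`), the symmetric profiles
`ξ_i = (α−b)/(β(N+1))` and `μ_i = (α−b)/(2βN)` satisfy the Nash-equilibrium
and optimality first-order conditions respectively, the efficiency ratio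
equals `4N/(N+1)²`, and this ratio tends to `0` as `N → ∞`. -/
theorem statement_3 (α β b : ℝ) (hb : 0 ≤ b) (hba : b < α) (hβ : 0 < β) :
    (∀ N : ℕ, 1 ≤ N →
      ((∀ _i : Fin N, 0 < (α - b) / (β * ((N : ℝ) + 1))) ∧
       -- Nash-equilibrium first-order conditions for ξ (with v_i' ≡ α, p' ≡ β)
       (∀ i : Fin N,
          α = (β * (∑ _j : Fin N, (α - b) / (β * ((N : ℝ) + 1))) + b)
              + ((α - b) / (β * ((N : ℝ) + 1))) * β) ∧
       (∀ _i : Fin N, 0 < (α - b) / (2 * β * (N : ℝ))) ∧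
       -- optimality first-order conditions for μ (with C'(g) = 2βg + b)
       (∀ i : Fin N,
          α = 2 * β * (∑ _j : Fin N, (α - b) / (2 * β * (N : ℝ))) + b) ∧
       -- the efficiency ratio equals 4N/(N+1)²
       ((∑ _i : Fin N, α * ((α - b) / (β * ((N : ℝ) + 1)))) -
            (∑ _i : Fin N, (α - b) / (β * ((N : ℝ) + 1))) *
              (β * (∑ _i : Fin N, (α - b) / (β * ((N : ℝ) + 1))) + b)) /
         ((∑ _i : Fin N, α * ((α - b) / (2 * β * (N : ℝ)))) -
            (∑ _i : Fin N, (α - b) / (2 * β * (N : ℝ))) *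
              (β * (∑ _i : Fin N, (α - b) / (2 * β * (N : ℝ))) + b))
        = 4 * (N : ℝ) / ((N : ℝ) + 1) ^ 2)) ∧
    Filter.Tendsto (fun N : ℕ => 4 * (N : ℝ) / ((N : ℝ) + 1) ^ 2)
      Filter.atTop (nhds 0) :=
  statement_3_general α β b hba hβ
end

section
/- Let N ≥ 2 and assume p is strictly increasing on (0,∞). Then no incentive function makes the mechanism budget balanced: there is no function h : (0,∞) → ℝ such that Σ_i I_i(q) = 0 for every profile q ≥ 0 with ‖q‖ > 0, where I_i(q) = ‖q_{-i}‖·(h(‖q_{-i}‖) − p(‖q‖)) and a term with ‖q_{-i}‖ = 0 is read as 0. Equivalently, there is no h for which the payments o_i(q) = q_i·p(‖q‖) + I_i(q) satisfy Σ_i o_i(q) = C(‖q‖) for every such profile q. -/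
/-!
Putting the whole demand `t` on one consumer leaves every other consumer facing `‖q_{-i}‖ = t`,
so with `N ≥ 2` budget balance forces `h t = p t` for all `t > 0`. Splitting a demand between
two consumers, `a` and `b`, then turns budget balance into `a p(a) + b p(b) = (a + b) p(a + b)`,
i.e. `C a + C b = C (a + b)`, which a strictly increasing `p` forbids.
-/

open Finset Set

variable {ι : Type*} [Fintype ι]

/-- `∑ i, I_i(q)`. A term with `‖q_{-i}‖ = 0` carries the factor `0`, so the convention that it
vanishes holds automatically. -/
noncomputable def totalIncentive (h p : ℝ → ℝ) (q : ι → ℝ) : ℝ :=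
  ∑ i, ((∑ j, q j) - q i) * (h ((∑ j, q j) - q i) - p (∑ j, q j))

lemma totalIncentive_single [DecidableEq ι] (h p : ℝ → ℝ) (i : ι) (t : ℝ) :
    totalIncentive h p (Pi.single i t) = (Fintype.card ι - 1) * (t * (h t - p t)) := by
  have hcard : (#({i}ᶜ : Finset ι) : ℝ) = Fintype.card ι - 1 := by
    rw [card_compl, Finset.card_singleton, Nat.cast_sub (Fintype.card_pos_iff.2 ⟨i⟩), Nat.cast_one]
  rw [totalIncentive, Fintype.sum_eq_add_sum_compl i, Fintype.sum_pi_single',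
    Pi.single_eq_same, sub_self, zero_mul, zero_add, ← hcard, ← nsmul_eq_mul, ← sum_const]
  refine sum_congr rfl fun k hk => ?_
  rw [Pi.single_eq_of_ne (by simpa using hk), sub_zero]

lemma totalIncentive_pair [DecidableEq ι] (h p : ℝ → ℝ) {i j : ι} (hij : i ≠ j) (a b : ℝ) :
    totalIncentive h p (Pi.single i a + Pi.single j b) =
      a * (h a - p (a + b)) + b * (h b - p (a + b)) +
        (Fintype.card ι - 2) * ((a + b) * (h (a + b) - p (a + b))) := by
  have hsum : ∑ k, (Pi.single i a + Pi.single j b : ι → ℝ) k = a + b := by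
    simp [sum_add_distrib]
  have hj : j ∈ univ.erase i := mem_erase.2 ⟨hij.symm, mem_univ _⟩
  have hcard : (#((univ.erase i).erase j) : ℝ) + 2 = Fintype.card ι := by
    norm_cast
    rw [← card_univ, ← card_erase_add_one (mem_univ i), ← card_erase_add_one hj]
  rw [totalIncentive, hsum, ← add_sum_erase _ _ (mem_univ i), ← add_sum_erase _ _ hj, ← hcard,
    add_sub_cancel_right, ← nsmul_eq_mul, ← sum_const, ← add_assoc]
  congr 1
  · simp [hij, hij.symm]
    ring
  · refine sum_congr rfl fun k hk => ?_
    obtain ⟨hkj, hki⟩ : k ≠ j ∧ k ≠ i := by simpa using hk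
    simp [hki, hkj]

variable (ι) in
def IsBudgetBalanced (h p : ℝ → ℝ) : Prop :=
  ∀ q : ι → ℝ, 0 ≤ q → 0 < ∑ i, q i → totalIncentive h p q = 0

namespace IsBudgetBalanced

variable {h p : ℝ → ℝ}

lemma apply_eq (hbal : IsBudgetBalanced ι h p) (hcard : 2 ≤ Fintype.card ι) {t : ℝ} (ht : 0 < t) :
    h t = p t := by
  classical
  obtain ⟨i⟩ := Fintype.card_pos_iff.1 (by omega : 0 < Fintype.card ι)
  have hzero := hbal (Pi.single i t) (Pi.single_nonneg.2 ht.le) (by simpa using ht)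
  have hcard' : (Fintype.card ι - 1 : ℝ) ≠ 0 := by
    have : (2 : ℝ) ≤ Fintype.card ι := by exact_mod_cast hcard
    linarith
  rw [totalIncentive_single, mul_eq_zero, mul_eq_zero] at hzero
  exact sub_eq_zero.1 ((hzero.resolve_left hcard').resolve_left ht.ne')

lemma mul_add_mul (hbal : IsBudgetBalanced ι h p) (hcard : 2 ≤ Fintype.card ι) {a b : ℝ}
    (ha : 0 < a) (hb : 0 < b) : a * p a + b * p b = (a + b) * p (a + b) := by
  classical
  obtain ⟨i, j, hij⟩ := Fintype.exists_pair_of_one_lt_card hcard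
  have hzero := hbal (Pi.single i a + Pi.single j b)
    (add_nonneg (Pi.single_nonneg.2 ha.le) (Pi.single_nonneg.2 hb.le))
    (by simpa [sum_add_distrib] using add_pos ha hb)
  rw [totalIncentive_pair _ _ hij, hbal.apply_eq hcard ha, hbal.apply_eq hcard hb,
    hbal.apply_eq hcard (add_pos ha hb)] at hzero
  linarith

end IsBudgetBalanced

lemma not_isBudgetBalanced (hcard : 2 ≤ Fintype.card ι) (h : ℝ → ℝ) {p : ℝ → ℝ}
    (hp : StrictMonoOn p (Ioi 0)) : ¬ IsBudgetBalanced ι h p := by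
  intro hbal
  have h12 : p 1 < p 2 := hp (mem_Ioi.2 one_pos) (mem_Ioi.2 two_pos) one_lt_two
  have h_additive := hbal.mul_add_mul hcard one_pos one_pos
  norm_num at h_additive
  linarith

theorem statement_4_general
    (N : ℕ) (hN : 2 ≤ N) (C p : ℝ → ℝ)
    (hp : ∀ g : ℝ, 0 < g → p g = C g / g)
    (hp_smono : StrictMonoOn p (Ioi (0 : ℝ))) :
    (¬ ∃ h : ℝ → ℝ, ∀ q : Fin N → ℝ, (∀ i, 0 ≤ q i) → 0 < ∑ i, q i →
        ∑ i, ((∑ j, q j) - q i) * (h ((∑ j, q j) - q i) - p (∑ j, q j)) = 0) ∧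
    (¬ ∃ h : ℝ → ℝ, ∀ q : Fin N → ℝ, (∀ i, 0 ≤ q i) → 0 < ∑ i, q i →
        ∑ i, (q i * p (∑ j, q j) +
          ((∑ j, q j) - q i) * (h ((∑ j, q j) - q i) - p (∑ j, q j)))
          = C (∑ j, q j)) := by
  have hcard : 2 ≤ Fintype.card (Fin N) := by rwa [Fintype.card_fin]
  have not_balanced : ¬ ∃ h, IsBudgetBalanced (Fin N) h p :=
    fun ⟨h, hbal⟩ => not_isBudgetBalanced hcard h hp_smono hbal
  refine ⟨not_balanced, fun ⟨h, hpay⟩ => not_balanced ⟨h, fun q hq hpos => ?_⟩⟩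
  have hcost : (∑ i, q i) * p (∑ i, q i) = C (∑ i, q i) := by
    rw [hp _ hpos, mul_div_cancel₀ _ hpos.ne']
  have hsum := hpay q hq hpos
  rwa [sum_add_distrib, ← sum_mul, hcost, add_eq_left] at hsum

/-- For `N ≥ 2` and a strictly increasing average-cost price,
no incentive function `h` makes the mechanism budget balanced: there is no
`h` with `Σ_i I_i(q) = 0` for every profile `q ≥ 0` with `‖q‖ > 0`, where
`I_i(q) = ‖q_{-i}‖·(h(‖q_{-i}‖) − p(‖q‖))`; equivalently, no `h` makes the
payments `o_i(q) = q_i·p(‖q‖) + I_i(q)` satisfy `Σ_i o_i(q) = C(‖q‖)`. -/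
theorem statement_4
    (N : ℕ) (hN : 2 ≤ N) (C p : ℝ → ℝ)
    (hC_diff : DifferentiableOn ℝ C (Ici (0 : ℝ)))
    (hC_sconvex : StrictConvexOn ℝ (Ici (0 : ℝ)) C)
    (hC0 : C 0 = 0)
    (hCpos : ∀ g : ℝ, 0 < g → 0 < C g)
    (hp : ∀ g : ℝ, 0 < g → p g = C g / g)
    (hp_smono : StrictMonoOn p (Ioi (0 : ℝ))) :
    (¬ ∃ h : ℝ → ℝ, ∀ q : Fin N → ℝ, (∀ i, 0 ≤ q i) → 0 < ∑ i, q i →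
        ∑ i, ((∑ j, q j) - q i) * (h ((∑ j, q j) - q i) - p (∑ j, q j)) = 0) ∧
    (¬ ∃ h : ℝ → ℝ, ∀ q : Fin N → ℝ, (∀ i, 0 ≤ q i) → 0 < ∑ i, q i →
        ∑ i, (q i * p (∑ j, q j) +
          ((∑ j, q j) - q i) * (h ((∑ j, q j) - q i) - p (∑ j, q j)))
          = C (∑ j, q j)) :=
  statement_4_general N hN C p hp hp_smono
end

section
/- Let h be any function, and let μ ≥ 0 be a profile such that for every i, μ_i maximizes q ↦ v_i(q) − C(q + ‖μ_{-i}‖) over q ≥ 0 (equivalently, μ_i is a best response of consumer i in the game with surpluses W_i, since W_i(q_i, μ_{-i}) differs from v_i(q_i) − C(q_i + ‖μ_{-i}‖) by a term independent of q_i). If h(‖μ_{-i}‖) − p(‖μ_{-i}‖) ≥ 0 (the condition read as holding automatically when ‖μ_{-i}‖ = 0), then the mechanism is individually rational for consumer i: W_i(μ) ≥ 0. -/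
open Finset Set

/-! Testing the best-response property of `μ_i` against the zero demand gives
`v_i(μ_i) − C(‖μ‖) ≥ −C(‖μ_{-i}‖)`, and the incentive condition says the
subsidy `‖μ_{-i}‖·h(‖μ_{-i}‖)` covers the cost `C(‖μ_{-i}‖) = ‖μ_{-i}‖·p(‖μ_{-i}‖)`. -/

theorem cost_le_mul_of_avgCost_le {C p h : ℝ → ℝ} {m : ℝ} (hm : 0 ≤ m) (hC0 : C 0 = 0)
    (hp : ∀ g : ℝ, 0 < g → p g = C g / g) (hcond : 0 < m → p m ≤ h m) :
    C m ≤ m * h m := by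
  rcases hm.eq_or_lt with rfl | hm
  · simp [hC0]
  · have hph := hcond hm
    rw [hp m hm, div_le_iff₀ hm] at hph
    linarith

theorem statement_7_general
    (N : ℕ) (v : Fin N → ℝ → ℝ) (C p h : ℝ → ℝ)
    (hv0 : ∀ i, v i 0 = 0)
    (hC0 : C 0 = 0)
    (hp : ∀ g : ℝ, 0 < g → p g = C g / g)
    (μ : Fin N → ℝ) (hμ_nonneg : ∀ i, 0 ≤ μ i)
    (hμ_max : ∀ i, ∀ x : ℝ, 0 ≤ x →
        v i x - C (x + ((∑ j, μ j) - μ i)) ≤ v i (μ i) - C (∑ j, μ j))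
    (i : Fin N)
    (hcond : 0 < (∑ j, μ j) - μ i →
        p ((∑ j, μ j) - μ i) ≤ h ((∑ j, μ j) - μ i)) :
    0 ≤ v i (μ i) - C (∑ j, μ j) +
        ((∑ j, μ j) - μ i) * h ((∑ j, μ j) - μ i) := by
  have hothers : 0 ≤ (∑ j, μ j) - μ i :=
    sub_nonneg.2 (single_le_sum (fun j _ => hμ_nonneg j) (mem_univ i))
  have hzero := hμ_max i 0 le_rfl
  rw [hv0 i, zero_add] at hzero
  linarith [cost_le_mul_of_avgCost_le hothers hC0 hp hcond]

/-- If `μ_i` maximizes `q ↦ v_i(q) − C(q + ‖μ_{-i}‖)` over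
`q ≥ 0` for every `i`, and `h(‖μ_{-i}‖) − p(‖μ_{-i}‖) ≥ 0` (automatic when
`‖μ_{-i}‖ = 0`), then the mechanism is individually rational for consumer `i`:
`W_i(μ) = v_i(μ_i) − C(‖μ‖) + ‖μ_{-i}‖·h(‖μ_{-i}‖) ≥ 0`. -/
theorem statement_7
    (N : ℕ) (v v' : Fin N → ℝ → ℝ) (C p h : ℝ → ℝ)
    (hv_deriv : ∀ i x, HasDerivAt (v i) (v' i x) x)
    (hv_concave : ∀ i, ConcaveOn ℝ (Ici (0 : ℝ)) (v i))
    (hv_mono : ∀ i, MonotoneOn (v i) (Ici (0 : ℝ)))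
    (hv0 : ∀ i, v i 0 = 0)
    (hC_diff : DifferentiableOn ℝ C (Ici (0 : ℝ)))
    (hC_sconvex : StrictConvexOn ℝ (Ici (0 : ℝ)) C)
    (hC0 : C 0 = 0)
    (hCpos : ∀ g : ℝ, 0 < g → 0 < C g)
    (hp : ∀ g : ℝ, 0 < g → p g = C g / g)
    (hp_mono : MonotoneOn p (Ioi (0 : ℝ)))
    (μ : Fin N → ℝ) (hμ_nonneg : ∀ i, 0 ≤ μ i)
    (hμ_max : ∀ i, ∀ x : ℝ, 0 ≤ x →
        v i x - C (x + ((∑ j, μ j) - μ i)) ≤ v i (μ i) - C (∑ j, μ j))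
    (i : Fin N)
    (hcond : 0 < (∑ j, μ j) - μ i →
        p ((∑ j, μ j) - μ i) ≤ h ((∑ j, μ j) - μ i)) :
    0 ≤ v i (μ i) - C (∑ j, μ j) +
        ((∑ j, μ j) - μ i) * h ((∑ j, μ j) - μ i) :=
  statement_7_general N v C p h hv0 hC0 hp μ hμ_nonneg hμ_max i hcond
end

section
/- Take h = p, so that I_i(q) = ‖q_{-i}‖·(p(‖q_{-i}‖) − p(‖q‖)). Then for every profile q ≥ 0 with ‖q‖ > 0: (a) I_i(q) ≤ 0 for every i, and hence the mechanism has budget deficit: Σ_i I_i(q) ≤ 0, equivalently Σ_i o_i(q) ≤ C(‖q‖); and (b) the mechanism is individually rational: if μ ≥ 0 is a profile such that for every i, μ_i maximizes q ↦ v_i(q) − C(q + ‖μ_{-i}‖) over q ≥ 0, then W_i(μ) ≥ 0 for every i. -/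
open Finset Set

/-! Both parts rest on the identity `g · p(g) = C(g)` for `g ≥ 0`. For (a), `‖q_{-i}‖ ≤ ‖q‖` and
monotonicity of `p` make each incentive `‖q_{-i}‖ (p(‖q_{-i}‖) − p(‖q‖))` non-positive, while the
payments `q_i p(‖q‖)` add up to `C(‖q‖)`. For (b), the incentive of `i` refunds exactly
`C(‖μ_{-i}‖)`, which is what consumer `i` would have to bear by demanding nothing; optimality of
`μ_i` against `x = 0` then gives `W_i(μ) ≥ v_i(0) = 0`. -/

section AverageCost

variable {C p : ℝ → ℝ}

theorem mul_averageCost_eq (hC0 : C 0 = 0) (hp : ∀ g : ℝ, 0 < g → p g = C g / g)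
    {t : ℝ} (ht : 0 ≤ t) : t * p t = C t := by
  rcases ht.eq_or_lt with rfl | ht
  · simp [hC0]
  · rw [hp t ht]
    field_simp

theorem mul_sub_nonpos_of_monotoneOn (hp_mono : MonotoneOn p (Ioi (0 : ℝ)))
    {t s : ℝ} (ht : 0 ≤ t) (hts : t ≤ s) : t * (p t - p s) ≤ 0 := by
  rcases ht.eq_or_lt with rfl | ht
  · simp
  · exact mul_nonpos_of_nonneg_of_nonpos ht.le <|
      sub_nonpos.2 <| hp_mono ht (ht.trans_le hts) hts

end AverageCost

theorem Finset.sum_sub_apply_nonneg {ι : Type*} [Fintype ι] {q : ι → ℝ} (hq : ∀ i, 0 ≤ q i)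
    (i : ι) : 0 ≤ (∑ j, q j) - q i :=
  sub_nonneg.2 <| single_le_sum (fun j _ => hq j) (mem_univ i)

section Mechanism

variable {ι : Type*} [Fintype ι] {C p : ℝ → ℝ}

theorem incentive_nonpos (hp_mono : MonotoneOn p (Ioi (0 : ℝ))) {q : ι → ℝ}
    (hq : ∀ i, 0 ≤ q i) (i : ι) :
    ((∑ j, q j) - q i) * (p ((∑ j, q j) - q i) - p (∑ j, q j)) ≤ 0 :=
  mul_sub_nonpos_of_monotoneOn hp_mono (sum_sub_apply_nonneg hq i) (sub_le_self _ (hq i))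

theorem sum_payment_le_cost (hC0 : C 0 = 0) (hp : ∀ g : ℝ, 0 < g → p g = C g / g)
    (hp_mono : MonotoneOn p (Ioi (0 : ℝ))) {q : ι → ℝ} (hq : ∀ i, 0 ≤ q i) :
    (∑ i, (q i * p (∑ j, q j) +
        ((∑ j, q j) - q i) * (p ((∑ j, q j) - q i) - p (∑ j, q j)))) ≤ C (∑ j, q j) := by
  have hpay : ∑ i, q i * p (∑ j, q j) = C (∑ j, q j) := by
    rw [← sum_mul, mul_averageCost_eq hC0 hp (sum_nonneg fun j _ => hq j)]
  have hinc := sum_nonpos fun i (_ : i ∈ Finset.univ) => incentive_nonpos hp_mono hq i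
  rw [sum_add_distrib, hpay]
  linarith

theorem surplus_nonneg_of_isMaxOn {v : ℝ → ℝ} (hv0 : v 0 = 0) (hC0 : C 0 = 0)
    (hp : ∀ g : ℝ, 0 < g → p g = C g / g) {μ : ι → ℝ} (hμ : ∀ i, 0 ≤ μ i) {i : ι}
    (hmax : ∀ x : ℝ, 0 ≤ x → v x - C (x + ((∑ j, μ j) - μ i)) ≤ v (μ i) - C (∑ j, μ j)) :
    0 ≤ v (μ i) - C (∑ j, μ j) + ((∑ j, μ j) - μ i) * p ((∑ j, μ j) - μ i) := by
  have hzero := hmax 0 le_rfl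
  rw [hv0, zero_add] at hzero
  rw [mul_averageCost_eq hC0 hp (sum_sub_apply_nonneg hμ i)]
  linarith

end Mechanism

theorem statement_8_general
    (N : ℕ) (v : Fin N → ℝ → ℝ) (C p : ℝ → ℝ)
    (hv0 : ∀ i, v i 0 = 0)
    (hC0 : C 0 = 0)
    (hp : ∀ g : ℝ, 0 < g → p g = C g / g)
    (hp_mono : MonotoneOn p (Ioi (0 : ℝ))) :
    -- (a) budget deficit
    (∀ q : Fin N → ℝ, (∀ i, 0 ≤ q i) → 0 < ∑ i, q i →
      (∀ i, ((∑ j, q j) - q i) * (p ((∑ j, q j) - q i) - p (∑ j, q j)) ≤ 0) ∧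
      (∑ i, ((∑ j, q j) - q i) * (p ((∑ j, q j) - q i) - p (∑ j, q j))) ≤ 0 ∧
      (∑ i, (q i * p (∑ j, q j) +
          ((∑ j, q j) - q i) * (p ((∑ j, q j) - q i) - p (∑ j, q j))))
        ≤ C (∑ j, q j)) ∧
    -- (b) individual rationality
    (∀ μ : Fin N → ℝ, (∀ i, 0 ≤ μ i) →
      (∀ i, ∀ x : ℝ, 0 ≤ x →
          v i x - C (x + ((∑ j, μ j) - μ i)) ≤ v i (μ i) - C (∑ j, μ j)) →
      ∀ i, 0 ≤ v i (μ i) - C (∑ j, μ j) +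
          ((∑ j, μ j) - μ i) * p ((∑ j, μ j) - μ i)) :=
  ⟨fun _ hq _ => ⟨incentive_nonpos hp_mono hq,
      sum_nonpos fun i _ => incentive_nonpos hp_mono hq i,
      sum_payment_le_cost hC0 hp hp_mono hq⟩,
    fun _ hμ hmax i => surplus_nonneg_of_isMaxOn (hv0 i) hC0 hp hμ (hmax i)⟩

/-- Taking `h = p`, so `I_i(q) = ‖q_{-i}‖·(p(‖q_{-i}‖) − p(‖q‖))`:
(a) every incentive is non-positive, the mechanism has budget deficit
(`Σ_i I_i(q) ≤ 0`, equivalently `Σ_i o_i(q) ≤ C(‖q‖)`); and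
(b) the mechanism is individually rational at any profile `μ` where each `μ_i`
maximizes `q ↦ v_i(q) − C(q + ‖μ_{-i}‖)` over `q ≥ 0`. -/
theorem statement_8
    (N : ℕ) (v v' : Fin N → ℝ → ℝ) (C p : ℝ → ℝ)
    (hv_deriv : ∀ i x, HasDerivAt (v i) (v' i x) x)
    (hv_concave : ∀ i, ConcaveOn ℝ (Ici (0 : ℝ)) (v i))
    (hv_mono : ∀ i, MonotoneOn (v i) (Ici (0 : ℝ)))
    (hv0 : ∀ i, v i 0 = 0)
    (hC_diff : DifferentiableOn ℝ C (Ici (0 : ℝ)))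
    (hC_sconvex : StrictConvexOn ℝ (Ici (0 : ℝ)) C)
    (hC0 : C 0 = 0)
    (hCpos : ∀ g : ℝ, 0 < g → 0 < C g)
    (hp : ∀ g : ℝ, 0 < g → p g = C g / g)
    (hp_mono : MonotoneOn p (Ioi (0 : ℝ))) :
    -- (a) budget deficit
    (∀ q : Fin N → ℝ, (∀ i, 0 ≤ q i) → 0 < ∑ i, q i →
      (∀ i, ((∑ j, q j) - q i) * (p ((∑ j, q j) - q i) - p (∑ j, q j)) ≤ 0) ∧
      (∑ i, ((∑ j, q j) - q i) * (p ((∑ j, q j) - q i) - p (∑ j, q j))) ≤ 0 ∧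
      (∑ i, (q i * p (∑ j, q j) +
          ((∑ j, q j) - q i) * (p ((∑ j, q j) - q i) - p (∑ j, q j))))
        ≤ C (∑ j, q j)) ∧
    -- (b) individual rationality
    (∀ μ : Fin N → ℝ, (∀ i, 0 ≤ μ i) →
      (∀ i, ∀ x : ℝ, 0 ≤ x →
          v i x - C (x + ((∑ j, μ j) - μ i)) ≤ v i (μ i) - C (∑ j, μ j)) →
      ∀ i, 0 ≤ v i (μ i) - C (∑ j, μ j) +
          ((∑ j, μ j) - μ i) * p ((∑ j, μ j) - μ i)) :=
  statement_8_general N v C p hv0 hC0 hp hp_mono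
end

section
/- Let N ≥ 2 and take h(g) = p((N/(N−1))·g). Then for every profile q ≥ 0 with ‖q‖ > 0: (a) the mechanism has budget surplus: Σ_i I_i(q) ≥ 0, equivalently Σ_i o_i(q) ≥ C(‖q‖); explicitly, since g·p(g) = C(g) with C convex, Σ_i ‖q_{-i}‖·p((N/(N−1))·‖q_{-i}‖) ≥ (N−1)·‖q‖·p(‖q‖); and (b) the mechanism is individually rational: if μ ≥ 0 is a profile such that for every i, μ_i maximizes q ↦ v_i(q) − C(q + ‖μ_{-i}‖) over q ≥ 0, then W_i(μ) ≥ 0 for every i. -/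
open Finset Set

/-- For `N ≥ 2` and `h(g) = p((N/(N−1))·g)`: (a) the mechanism
has budget surplus (`Σ_i I_i(q) ≥ 0`, equivalently `Σ_i o_i(q) ≥ C(‖q‖)`;
explicitly `Σ_i ‖q_{-i}‖·p((N/(N−1))·‖q_{-i}‖) ≥ (N−1)·‖q‖·p(‖q‖)`); and
(b) the mechanism is individually rational at any profile `μ` where each `μ_i`
maximizes `q ↦ v_i(q) − C(q + ‖μ_{-i}‖)` over `q ≥ 0`. -/
theorem statement_9
    (N : ℕ) (hN : 2 ≤ N)
    (v v' : Fin N → ℝ → ℝ) (C p : ℝ → ℝ)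
    (hv_deriv : ∀ i x, HasDerivAt (v i) (v' i x) x)
    (hv_concave : ∀ i, ConcaveOn ℝ (Ici (0 : ℝ)) (v i))
    (hv_mono : ∀ i, MonotoneOn (v i) (Ici (0 : ℝ)))
    (hv0 : ∀ i, v i 0 = 0)
    (hC_diff : DifferentiableOn ℝ C (Ici (0 : ℝ)))
    (hC_sconvex : StrictConvexOn ℝ (Ici (0 : ℝ)) C)
    (hC0 : C 0 = 0)
    (hCpos : ∀ g : ℝ, 0 < g → 0 < C g)
    (hp : ∀ g : ℝ, 0 < g → p g = C g / g)
    (hp_mono : MonotoneOn p (Ioi (0 : ℝ))) :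
    -- (a) budget surplus
    (∀ q : Fin N → ℝ, (∀ i, 0 ≤ q i) → 0 < ∑ i, q i →
      0 ≤ (∑ i, ((∑ j, q j) - q i) *
            (p ((N : ℝ) / ((N : ℝ) - 1) * ((∑ j, q j) - q i)) - p (∑ j, q j))) ∧
      C (∑ j, q j) ≤ (∑ i, (q i * p (∑ j, q j) +
            ((∑ j, q j) - q i) *
              (p ((N : ℝ) / ((N : ℝ) - 1) * ((∑ j, q j) - q i)) - p (∑ j, q j)))) ∧
      ((N : ℝ) - 1) * (∑ j, q j) * p (∑ j, q j)
        ≤ ∑ i, ((∑ j, q j) - q i) *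
            p ((N : ℝ) / ((N : ℝ) - 1) * ((∑ j, q j) - q i))) ∧
    -- (b) individual rationality
    (∀ μ : Fin N → ℝ, (∀ i, 0 ≤ μ i) →
      (∀ i, ∀ x : ℝ, 0 ≤ x →
          v i x - C (x + ((∑ j, μ j) - μ i)) ≤ v i (μ i) - C (∑ j, μ j)) →
      ∀ i, 0 ≤ v i (μ i) - C (∑ j, μ j) +
          ((∑ j, μ j) - μ i) * p ((N : ℝ) / ((N : ℝ) - 1) * ((∑ j, μ j) - μ i))) := by
  have hN2 : (2:ℝ) ≤ (N:ℝ) := by exact_mod_cast hN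
  have hN1 : (0:ℝ) < (N:ℝ) - 1 := by linarith
  have hNpos : (0:ℝ) < (N:ℝ) := by linarith
  set c : ℝ := (N : ℝ) / ((N : ℝ) - 1) with hc
  have hcpos : 0 < c := div_pos hNpos hN1
  have hc1 : 1 ≤ c := by rw [hc, le_div_iff₀ hN1]; linarith
  have hcN : c * ((N:ℝ) - 1) = (N:ℝ) := by rw [hc, div_mul_cancel₀ _ hN1.ne']
  -- key pointwise identity: for s ≥ 0, s * p (c*s) = C (c*s) / c
  have key : ∀ s : ℝ, 0 ≤ s → s * p (c * s) = C (c * s) / c := by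
    intro s hs
    rcases eq_or_lt_of_le hs with h | h
    · simp [← h, hC0]
    · have hcs : 0 < c * s := mul_pos hcpos h
      rw [hp _ hcs]
      field_simp
  -- nonneg of the "others" sum
  have hothers : ∀ (q : Fin N → ℝ), (∀ i, 0 ≤ q i) → ∀ i, 0 ≤ (∑ j, q j) - q i := by
    intro q hq i
    have : (∑ j, q j) = q i + ∑ j ∈ Finset.univ.erase i, q j :=
      (Finset.add_sum_erase _ _ (Finset.mem_univ i)).symm
    rw [this]
    have : 0 ≤ ∑ j ∈ Finset.univ.erase i, q j :=
      Finset.sum_nonneg fun j _ => hq j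
    linarith
  constructor
  · intro q hq hQ
    set Q : ℝ := ∑ j, q j with hQdef
    have hs0 : ∀ i, 0 ≤ Q - q i := hothers q hq
    have hsum : ∑ i, (Q - q i) = ((N:ℝ) - 1) * Q := by
      rw [Finset.sum_sub_distrib, Finset.sum_const, Finset.card_univ, Fintype.card_fin]
      push_cast
      ring
    have hpQ : p Q = C Q / Q := hp Q hQ
    -- Jensen
    have hjensen : C Q ≤ ∑ i, ((N:ℝ))⁻¹ • C (c * (Q - q i)) := by
      have := (hC_sconvex.convexOn).map_sum_le (t := Finset.univ)
        (w := fun _ : Fin N => ((N:ℝ))⁻¹) (p := fun i => c * (Q - q i))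
        (fun i _ => by positivity)
        (by simp [Finset.card_univ]; field_simp)
        (fun i _ => by exact mul_nonneg hcpos.le (hs0 i))
      have heq : (∑ i : Fin N, ((N:ℝ))⁻¹ • (c * (Q - q i))) = Q := by
        simp only [smul_eq_mul, ← Finset.mul_sum]
        rw [hsum]
        have h4 : c * ((((N:ℝ)) - 1) * Q) = (N:ℝ) * Q := by rw [← mul_assoc, hcN]
        rw [h4, inv_mul_cancel_left₀ hNpos.ne']
      rwa [heq] at this
    have hmain : ((N:ℝ) - 1) * Q * p Q ≤ ∑ i, (Q - q i) * p (c * (Q - q i)) := by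
      have h1 : ∑ i, (Q - q i) * p (c * (Q - q i)) = ∑ i, C (c * (Q - q i)) / c :=
        Finset.sum_congr rfl fun i _ => key _ (hs0 i)
      rw [h1, hpQ]
      have h2 : ((N:ℝ) - 1) * Q * (C Q / Q) = ((N:ℝ) - 1) * C Q := by
        field_simp
      rw [h2]
      have h3 : ∑ i, C (c * (Q - q i)) / c = (∑ i, ((N:ℝ))⁻¹ • C (c * (Q - q i))) * ((N:ℝ)/c) := by
        rw [Finset.sum_mul]
        refine Finset.sum_congr rfl fun i _ => ?_
        simp only [smul_eq_mul]
        field_simp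
      rw [h3]
      have hNc : (N:ℝ)/c = (N:ℝ) - 1 := by rw [eq_comm, eq_div_iff hcpos.ne', mul_comm]; exact hcN
      rw [hNc]
      have := mul_le_mul_of_nonneg_right hjensen hN1.le
      linarith
    have hI : 0 ≤ ∑ i, (Q - q i) * (p (c * (Q - q i)) - p Q) := by
      have : ∑ i, (Q - q i) * (p (c * (Q - q i)) - p Q)
          = (∑ i, (Q - q i) * p (c * (Q - q i))) - ((N:ℝ) - 1) * Q * p Q := by
        rw [Finset.sum_congr rfl (fun i _ => mul_sub (Q - q i) _ _),
          Finset.sum_sub_distrib, ← Finset.sum_mul, hsum]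
      rw [this]
      linarith
    refine ⟨hI, ?_, hmain⟩
    have hsplit : (∑ i, (q i * p Q + (Q - q i) * (p (c * (Q - q i)) - p Q)))
        = Q * p Q + ∑ i, (Q - q i) * (p (c * (Q - q i)) - p Q) := by
      rw [Finset.sum_add_distrib, ← Finset.sum_mul]
    rw [hsplit]
    have hCQ : C Q = Q * p Q := by rw [hpQ]; field_simp
    linarith
  · intro μ hμ hopt i
    set M : ℝ := ∑ j, μ j with hM
    set s : ℝ := M - μ i with hsdef
    have hs : 0 ≤ s := hothers μ hμ i
    have h0 := hopt i 0 le_rfl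
    rw [hv0, zero_add] at h0
    have hCs : C s ≤ s * p (c * s) := by
      rcases eq_or_lt_of_le hs with h | h
      · simp [← h, hC0]
      · have hps : p s = C s / s := hp s h
        have hmono := hp_mono (mem_Ioi.mpr h) (mem_Ioi.mpr (by nlinarith : (0:ℝ) < c * s))
          (by nlinarith : s ≤ c * s)
        have : C s = s * p s := by rw [hps]; field_simp
        rw [this]
        exact mul_le_mul_of_nonneg_left hmono hs
    linarith
end

section
/- Let h be any function. For every i and every fixed q_{-i} ≥ 0, the difference W_i(q_i, q_{-i}) − (Σ_j v_j(q_j) − C(‖q‖)) between consumer i's surplus with incentives and the customer surplus does not depend on q_i. Consequently, if μ ≥ 0 maximizes the customer surplus Σ_i v_i(q_i) − C(‖q‖) over all profiles q ≥ 0, then μ is a Nash equilibrium of the game with incentives: for every i and every q ≥ 0, W_i(μ_i, μ_{-i}) ≥ W_i(q, μ_{-i}). -/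
open Finset Set

/-- Surplus with incentives:
`W_i(q) = v_i(q_i) − q_i·p(‖q‖) + ‖q_{-i}‖·(h(‖q_{-i}‖) − p(‖q‖))`. -/
noncomputable def Wsurplus {N : ℕ} (v : Fin N → ℝ → ℝ) (p h : ℝ → ℝ)
    (i : Fin N) (q : Fin N → ℝ) : ℝ :=
  v i (q i) - q i * p (∑ j, q j) +
    ((∑ j, q j) - q i) * (h ((∑ j, q j) - q i) - p (∑ j, q j))

/-- Customer surplus: `S(q) = Σ_j v_j(q_j) − C(‖q‖)`. -/
noncomputable def customerSurplus {N : ℕ} (v : Fin N → ℝ → ℝ) (C : ℝ → ℝ)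
    (q : Fin N → ℝ) : ℝ :=
  (∑ j, v j (q j)) - C (∑ j, q j)

/-- The difference `W_i(q_i, q_{-i}) − (Σ_j v_j(q_j) − C(‖q‖))`
does not depend on `q_i`; consequently, any maximizer `μ ≥ 0` of the customer
surplus over non-negative profiles is a Nash equilibrium of the game with
incentives. -/
theorem statement_10
    (N : ℕ) (v v' : Fin N → ℝ → ℝ) (C p h : ℝ → ℝ)
    (hv_deriv : ∀ i x, HasDerivAt (v i) (v' i x) x)
    (hv_concave : ∀ i, ConcaveOn ℝ (Ici (0 : ℝ)) (v i))
    (hv_mono : ∀ i, MonotoneOn (v i) (Ici (0 : ℝ)))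
    (hv0 : ∀ i, v i 0 = 0)
    (hC_diff : DifferentiableOn ℝ C (Ici (0 : ℝ)))
    (hC_sconvex : StrictConvexOn ℝ (Ici (0 : ℝ)) C)
    (hC0 : C 0 = 0)
    (hCpos : ∀ g : ℝ, 0 < g → 0 < C g)
    (hp : ∀ g : ℝ, 0 < g → p g = C g / g) :
    -- the difference is independent of consumer i's own demand
    (∀ (i : Fin N) (q : Fin N → ℝ), (∀ j, 0 ≤ q j) →
      ∀ x y : ℝ, 0 ≤ x → 0 ≤ y →
        Wsurplus v p h i (Function.update q i x) -
            customerSurplus v C (Function.update q i x) =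
          Wsurplus v p h i (Function.update q i y) -
            customerSurplus v C (Function.update q i y)) ∧
    -- a customer-surplus maximizer is a Nash equilibrium with incentives
    (∀ μ : Fin N → ℝ, (∀ j, 0 ≤ μ j) →
      (∀ q : Fin N → ℝ, (∀ j, 0 ≤ q j) →
          customerSurplus v C q ≤ customerSurplus v C μ) →
      ∀ (i : Fin N) (x : ℝ), 0 ≤ x →
        Wsurplus v p h i (Function.update μ i x) ≤ Wsurplus v p h i μ) := by
  -- Key computation: W_i(q) - S(q) = r·h(r) - Σ_{j≠i} v_j(q_j), r = ‖q_{-i}‖.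
  have key : ∀ (i : Fin N) (q : Fin N → ℝ), (∀ j, 0 ≤ q j) →
      Wsurplus v p h i q - customerSurplus v C q =
        ((∑ j, q j) - q i) * h ((∑ j, q j) - q i) -
          ∑ j ∈ Finset.univ.erase i, v j (q j) := by
    intro i q hq
    have hsplit : ∑ j ∈ Finset.univ.erase i, q j + q i = ∑ j, q j :=
      Finset.sum_erase_add _ _ (Finset.mem_univ i)
    have hvsplit : ∑ j ∈ Finset.univ.erase i, v j (q j) + v i (q i) = ∑ j, v j (q j) :=
      Finset.sum_erase_add _ _ (Finset.mem_univ i)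
    have hr : (∑ j, q j) - q i = ∑ j ∈ Finset.univ.erase i, q j := by
      linarith
    have hrnn : 0 ≤ (∑ j, q j) - q i := by
      rw [hr]; exact Finset.sum_nonneg fun j _ => hq j
    have hsnn : 0 ≤ ∑ j, q j := Finset.sum_nonneg fun j _ => hq j
    rcases eq_or_lt_of_le hsnn with hs0 | hs
    · -- total demand is zero
      have hqi : q i = 0 := by
        have := hq i
        nlinarith
      simp only [Wsurplus, customerSurplus, ← hs0, hqi]
      rw [← hvsplit]
      simp [hC0]
      rw [hqi]
    · -- total demand positive
      have hps : p (∑ j, q j) = C (∑ j, q j) / (∑ j, q j) := hp _ hs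
      have hC : q i * p (∑ j, q j) + ((∑ j, q j) - q i) * p (∑ j, q j)
          = C (∑ j, q j) := by
        rw [hps]; field_simp; ring
      simp only [Wsurplus, customerSurplus]
      rw [← hvsplit]
      linarith
  have sum_update : ∀ (i : Fin N) (q : Fin N → ℝ) (x : ℝ),
      (∑ j, Function.update q i x j) - Function.update q i x i =
        ∑ j ∈ Finset.univ.erase i, q j := by
    intro i q x
    rw [Finset.sum_update_of_mem (Finset.mem_univ i), Function.update_self,
      Finset.erase_eq]
    ring
  have upd_nonneg : ∀ (i : Fin N) (q : Fin N → ℝ) (x : ℝ), (∀ j, 0 ≤ q j) → 0 ≤ x →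
      ∀ j, 0 ≤ Function.update q i x j := by
    intro i q x hq hx j
    rcases eq_or_ne j i with rfl | hji
    · simpa using hx
    · rw [Function.update_of_ne hji]; exact hq j
  have diff_eq : ∀ (i : Fin N) (q : Fin N → ℝ), (∀ j, 0 ≤ q j) →
      ∀ x : ℝ, 0 ≤ x →
        Wsurplus v p h i (Function.update q i x) -
            customerSurplus v C (Function.update q i x) =
          (∑ j ∈ Finset.univ.erase i, q j) * h (∑ j ∈ Finset.univ.erase i, q j) -
            ∑ j ∈ Finset.univ.erase i, v j (q j) := by
    intro i q hq x hx
    rw [key i _ (upd_nonneg i q x hq hx), sum_update]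
    congr 1
    exact Finset.sum_congr rfl fun j hj => by
      rw [Function.update_of_ne (Finset.ne_of_mem_erase hj)]
  constructor
  · intro i q hq x y hx hy
    rw [diff_eq i q hq x hx, diff_eq i q hq y hy]
  · intro μ hμ hmax i x hx
    have h1 := diff_eq i μ hμ x hx
    have h2 := diff_eq i μ hμ (μ i) (hμ i)
    rw [Function.update_eq_self] at h2
    have hS := hmax (Function.update μ i x) (upd_nonneg i μ x hμ hx)
    linarith
end

section
/- Assume each v_i is strictly concave, and p is differentiable and non-decreasing on (0,∞) with p' non-negative and non-decreasing on (0,∞). Let P ⊆ P̂ be two finite populations of consumers, where the consumers in P have the same valuations in both populations. Let ξ (indexed by P) and ξ̂ (indexed by P̂) satisfy the Nash-equilibrium first-order conditions for the populations P and P̂ respectively, with positive total demands. Then the total demand does not decrease when the population grows: Σ_{i∈P} ξ_i ≤ Σ_{i∈P̂} ξ̂_i. -/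
open Finset Set

/-!
If the total demand `Ĝ` in `P̂` were below the total demand `G` in `P`, then by monotonicity
of `p` and `p'` every consumer of `P` would face a weakly lower marginal price `p(Ĝ) + x p'(Ĝ)`
in `P̂` than in `P`. Strict concavity makes marginal valuations strictly decreasing, so each
consumer of `P` demands at least as much in `P̂`; summing over `P ⊆ P̂` gives `G ≤ Ĝ`.
-/

lemma StrictConcaveOn.strictAntiOn_of_hasDerivAt {S : Set ℝ} {f f' : ℝ → ℝ}
    (hf : StrictConcaveOn ℝ S f) (hf' : ∀ x ∈ S, HasDerivAt f (f' x) x) :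
    StrictAntiOn f' S := by
  intro x hx y hy hxy
  rw [← (hf' x hx).deriv, ← (hf' y hy).deriv]
  exact hf.strictAntiOn_deriv (fun z hz ↦ (hf' z hz).differentiableAt) hx hy hxy

lemma StrictAntiOn.le_of_eq_add_mul_of_le_add_mul {w : ℝ → ℝ} (hw : StrictAntiOn w (Ici 0))
    {x y a b a' b' : ℝ} (hx : 0 < x → w x = a + x * b) (hy₀ : 0 ≤ y)
    (hy : w y ≤ a' + y * b') (ha : a' ≤ a) (hb'₀ : 0 ≤ b') (hb : b' ≤ b) : x ≤ y := by
  by_contra! hyx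
  have hx₀ : 0 < x := hy₀.trans_lt hyx
  have hwlt : w x < w y := hw (mem_Ici.2 hy₀) (mem_Ici.2 hx₀.le) hyx
  have hyb : y * b' ≤ x * b' := mul_le_mul_of_nonneg_right hyx.le hb'₀
  have hxb : x * b' ≤ x * b := mul_le_mul_of_nonneg_left hb hx₀.le
  linarith [hx hx₀]

theorem statement_11_general
    (ι : Type*) (P Phat : Finset ι) (hPP : P ⊆ Phat)
    (v v' : ι → ℝ → ℝ)
    (hv_deriv : ∀ i x, HasDerivAt (v i) (v' i x) x)
    (hv_sconcave : ∀ i, StrictConcaveOn ℝ (Ici (0 : ℝ)) (v i))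
    (p p' : ℝ → ℝ)
    (hp_mono : MonotoneOn p (Ioi (0 : ℝ)))
    (hp'_nonneg : ∀ g : ℝ, 0 < g → 0 ≤ p' g)
    (hp'_mono : MonotoneOn p' (Ioi (0 : ℝ)))
    (ξ ξhat : ι → ℝ)
    (hξ_pos : 0 < ∑ i ∈ P, ξ i)
    (hξ_eq : ∀ i ∈ P, 0 < ξ i →
        v' i (ξ i) = p (∑ j ∈ P, ξ j) + ξ i * p' (∑ j ∈ P, ξ j))
    (hξhat_nonneg : ∀ i ∈ Phat, 0 ≤ ξhat i)
    (hξhat_pos : 0 < ∑ i ∈ Phat, ξhat i)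
    (hξhat_le : ∀ i ∈ Phat,
        v' i (ξhat i) ≤ p (∑ j ∈ Phat, ξhat j) + ξhat i * p' (∑ j ∈ Phat, ξhat j)) :
    (∑ i ∈ P, ξ i) ≤ ∑ i ∈ Phat, ξhat i := by
  by_contra! hlt
  have hdemand : ∀ i ∈ P, ξ i ≤ ξhat i := fun i hi ↦
    have hmarginal := (hv_sconcave i).strictAntiOn_of_hasDerivAt fun x _ ↦ hv_deriv i x
    hmarginal.le_of_eq_add_mul_of_le_add_mul (hξ_eq i hi) (hξhat_nonneg i (hPP hi))
      (hξhat_le i (hPP hi)) (hp_mono hξhat_pos hξ_pos hlt.le) (hp'_nonneg _ hξhat_pos)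
      (hp'_mono hξhat_pos hξ_pos hlt.le)
  have hle : ∑ i ∈ P, ξ i ≤ ∑ i ∈ Phat, ξhat i :=
    calc ∑ i ∈ P, ξ i ≤ ∑ i ∈ P, ξhat i := sum_le_sum hdemand
      _ ≤ ∑ i ∈ Phat, ξhat i :=
        sum_le_sum_of_subset_of_nonneg hPP fun i hi _ ↦ hξhat_nonneg i hi
  exact hle.not_gt hlt

/-- With strictly concave valuations and a differentiable,
non-decreasing price with non-negative, non-decreasing derivative, the total
Nash-equilibrium demand does not decrease when the population grows from `P`
to `P̂ ⊇ P`. -/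
theorem statement_11
    (ι : Type*) (P Phat : Finset ι) (hPP : P ⊆ Phat)
    (v v' : ι → ℝ → ℝ)
    (hv_deriv : ∀ i x, HasDerivAt (v i) (v' i x) x)
    (hv_sconcave : ∀ i, StrictConcaveOn ℝ (Ici (0 : ℝ)) (v i))
    (hv_mono : ∀ i, MonotoneOn (v i) (Ici (0 : ℝ)))
    (hv0 : ∀ i, v i 0 = 0)
    (C p p' : ℝ → ℝ)
    (hC_diff : DifferentiableOn ℝ C (Ici (0 : ℝ)))
    (hC_sconvex : StrictConvexOn ℝ (Ici (0 : ℝ)) C)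
    (hC0 : C 0 = 0)
    (hCpos : ∀ g : ℝ, 0 < g → 0 < C g)
    (hp : ∀ g : ℝ, 0 < g → p g = C g / g)
    (hp_deriv : ∀ g : ℝ, 0 < g → HasDerivAt p (p' g) g)
    (hp_mono : MonotoneOn p (Ioi (0 : ℝ)))
    (hp'_nonneg : ∀ g : ℝ, 0 < g → 0 ≤ p' g)
    (hp'_mono : MonotoneOn p' (Ioi (0 : ℝ)))
    (ξ ξhat : ι → ℝ)
    (hξ_nonneg : ∀ i ∈ P, 0 ≤ ξ i)
    (hξ_pos : 0 < ∑ i ∈ P, ξ i)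
    (hξ_le : ∀ i ∈ P, v' i (ξ i) ≤ p (∑ j ∈ P, ξ j) + ξ i * p' (∑ j ∈ P, ξ j))
    (hξ_eq : ∀ i ∈ P, 0 < ξ i →
        v' i (ξ i) = p (∑ j ∈ P, ξ j) + ξ i * p' (∑ j ∈ P, ξ j))
    (hξhat_nonneg : ∀ i ∈ Phat, 0 ≤ ξhat i)
    (hξhat_pos : 0 < ∑ i ∈ Phat, ξhat i)
    (hξhat_le : ∀ i ∈ Phat,
        v' i (ξhat i) ≤ p (∑ j ∈ Phat, ξhat j) + ξhat i * p' (∑ j ∈ Phat, ξhat j))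
    (hξhat_eq : ∀ i ∈ Phat, 0 < ξhat i →
        v' i (ξhat i) = p (∑ j ∈ Phat, ξhat j) + ξhat i * p' (∑ j ∈ Phat, ξhat j)) :
    (∑ i ∈ P, ξ i) ≤ ∑ i ∈ Phat, ξhat i :=
  statement_11_general ι P Phat hPP v v' hv_deriv hv_sconcave p p' hp_mono hp'_nonneg hp'_mono ξ
    ξhat hξ_pos hξ_eq hξhat_nonneg hξhat_pos hξhat_le
end

section
/- Suppose all consumers share a common valuation v that is differentiable, concave and non-decreasing with v' continuous on [0,∞), and that p is continuously differentiable on [0,∞) with p'(g) ≥ 0 and p(g) → ∞ as g → ∞. If v'(0) > p(0), then for every N ≥ 1 there exists x̄ > 0 such that v'(x̄) = p(N·x̄) + x̄·p'(N·x̄); consequently the symmetric profile ξ = (x̄, …, x̄) ∈ ℝ^N satisfies the Nash-equilibrium first-order conditions and every consumer has strictly positive demand. -/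
open Finset Set

/-- With a common valuation `v` (with `v'` continuous on
`[0,∞)`), a continuously differentiable price `p` on `[0,∞)` with `p' ≥ 0`
and `p(g) → ∞`, and `v'(0) > p(0)`, for every `N ≥ 1` there exists `x̄ > 0`
with `v'(x̄) = p(N·x̄) + x̄·p'(N·x̄)`; hence the symmetric profile
`ξ = (x̄,…,x̄)` satisfies the Nash-equilibrium first-order conditions and
every consumer has strictly positive demand. -/
theorem statement_12
    (N : ℕ) (hN : 1 ≤ N)
    (v v' : ℝ → ℝ) (C p p' : ℝ → ℝ)
    (hv_deriv : ∀ x, HasDerivAt v (v' x) x)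
    (hv_concave : ConcaveOn ℝ (Ici (0 : ℝ)) v)
    (hv_mono : MonotoneOn v (Ici (0 : ℝ)))
    (hv0 : v 0 = 0)
    (hv'_cont : ContinuousOn v' (Ici (0 : ℝ)))
    (hC_diff : DifferentiableOn ℝ C (Ici (0 : ℝ)))
    (hC_sconvex : StrictConvexOn ℝ (Ici (0 : ℝ)) C)
    (hC0 : C 0 = 0)
    (hCpos : ∀ g : ℝ, 0 < g → 0 < C g)
    (hp : ∀ g : ℝ, 0 < g → p g = C g / g)
    (hp_deriv : ∀ g : ℝ, 0 ≤ g → HasDerivAt p (p' g) g)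
    (hp'_cont : ContinuousOn p' (Ici (0 : ℝ)))
    (hp'_nonneg : ∀ g : ℝ, 0 ≤ g → 0 ≤ p' g)
    (hp_top : Filter.Tendsto p Filter.atTop Filter.atTop)
    (hv'0 : p 0 < v' 0) :
    ∃ x : ℝ, 0 < x ∧
      v' x = p ((N : ℝ) * x) + x * p' ((N : ℝ) * x) ∧
      v' x = p (∑ _j : Fin N, x) + x * p' (∑ _j : Fin N, x) := by
  have hNpos : (1 : ℝ) ≤ (N : ℝ) := by exact_mod_cast hN
  -- v' is antitone on [0, ∞)
  have hv'_anti : ∀ x : ℝ, 0 ≤ x → v' x ≤ v' 0 := by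
    intro x hx
    rcases eq_or_lt_of_le hx with rfl | hx'
    · exact le_refl _
    have hconv : ConvexOn ℝ (Ici (0 : ℝ)) (fun t => -v t) := hv_concave.neg
    have h1 : -v' 0 ≤ slope (fun t => -v t) 0 x :=
      hconv.le_slope_of_hasDerivAt (self_mem_Ici) hx hx' ((hv_deriv 0).neg)
    have h2 : slope (fun t => -v t) 0 x ≤ -v' x :=
      hconv.slope_le_of_hasDerivAt (self_mem_Ici) hx hx' ((hv_deriv x).neg)
    linarith [h1.trans h2]
  -- continuity of p on nonneg reals
  have hp_cont : ∀ g : ℝ, 0 ≤ g → ContinuousAt p g := fun g hg =>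
    (hp_deriv g hg).continuousAt
  -- Pick X with p large
  obtain ⟨X₀, hX₀⟩ := (Filter.tendsto_atTop.mp hp_top (v' 0)).exists_forall_of_atTop
  set X : ℝ := max 1 X₀ with hXdef
  have hX1 : (1 : ℝ) ≤ X := le_max_left _ _
  have hXpos : (0 : ℝ) < X := lt_of_lt_of_le one_pos hX1
  have hNX : X₀ ≤ (N : ℝ) * X := by
    calc X₀ ≤ X := le_max_right _ _
    _ = 1 * X := (one_mul X).symm
    _ ≤ (N : ℝ) * X := by nlinarith
  -- Define G
  set G : ℝ → ℝ := fun x => p ((N : ℝ) * x) + x * p' ((N : ℝ) * x) - v' x with hGdef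
  have hG0 : G 0 < 0 := by
    simp only [hGdef, mul_zero, zero_mul, add_zero]
    linarith
  have hGX : 0 ≤ G X := by
    have h1 : v' 0 ≤ p ((N : ℝ) * X) := hX₀ _ hNX
    have h2 : v' X ≤ v' 0 := hv'_anti X hXpos.le
    have h3 : 0 ≤ X * p' ((N : ℝ) * X) :=
      mul_nonneg hXpos.le (hp'_nonneg _ (by positivity))
    simp only [hGdef]
    linarith
  -- G continuous on [0, X]
  have hmaps : MapsTo (fun x : ℝ => (N : ℝ) * x) (Icc (0 : ℝ) X) (Ici (0 : ℝ)) := by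
    intro t ht
    have : (0:ℝ) ≤ t := ht.1
    have : (0:ℝ) ≤ (N:ℝ) := by positivity
    exact Set.mem_Ici.mpr (mul_nonneg (Nat.cast_nonneg N) ht.1)
  have hlin : ContinuousOn (fun x : ℝ => (N : ℝ) * x) (Icc (0 : ℝ) X) :=
    (continuous_const.mul continuous_id).continuousOn
  have hGcont : ContinuousOn G (Icc (0 : ℝ) X) := by
    apply ContinuousOn.sub
    · apply ContinuousOn.add
      · intro t ht
        exact ((hp_cont _ (hmaps ht)).comp
          ((continuous_const.mul continuous_id).continuousAt)).continuousWithinAt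
      · exact continuousOn_id.mul ((hp'_cont.comp hlin hmaps))
    · exact hv'_cont.mono (fun t ht => ht.1)
  -- IVT
  have h0mem : (0 : ℝ) ∈ Ioc (G 0) (G X) := ⟨hG0, hGX⟩
  obtain ⟨c, hc, hGc⟩ := intermediate_value_Ioc hXpos.le hGcont h0mem
  refine ⟨c, hc.1, ?_, ?_⟩
  · have : p ((N : ℝ) * c) + c * p' ((N : ℝ) * c) - v' c = 0 := hGc
    linarith
  · have hsum : (∑ _j : Fin N, c) = (N : ℝ) * c := by
      simp [Finset.sum_const, Finset.card_univ, nsmul_eq_mul]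
    rw [hsum]
    have : p ((N : ℝ) * c) + c * p' ((N : ℝ) * c) - v' c = 0 := hGc
    linarith
end

section
/- Suppose all consumers share a common valuation v that is differentiable, strictly concave and non-decreasing, and that p is differentiable and non-decreasing on (0,∞) with p' positive and non-decreasing on (0,∞). For N ≥ 1, let ξ̄_N > 0 satisfy the symmetric Nash-equilibrium condition v'(ξ̄_N) = p(N·ξ̄_N) + ξ̄_N·p'(N·ξ̄_N), and let ξ̄_{N+1} > 0 satisfy v'(ξ̄_{N+1}) = p((N+1)·ξ̄_{N+1}) + ξ̄_{N+1}·p'((N+1)·ξ̄_{N+1}). Then the total demand strictly increases with the number of consumers: N·ξ̄_N < (N+1)·ξ̄_{N+1}. -/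
open Set

/-!
If the total demand did not grow, `(N+1)·ξ̄_{N+1} ≤ N·ξ̄_N` would force `ξ̄_{N+1} < ξ̄_N`. The marginal
price `p g + x·p' g` is monotone in both the total demand `g` and the own demand `x`, so the
equilibrium conditions give `v'(ξ̄_{N+1}) ≤ v'(ξ̄_N)`, whereas strict concavity of `v` makes `v'`
strictly decreasing.
-/

theorem add_mul_le_add_mul_of_monotoneOn {p p' : ℝ → ℝ} (hp : MonotoneOn p (Ioi 0))
    (hp' : MonotoneOn p' (Ioi 0)) (hp'_nonneg : ∀ g, 0 < g → 0 ≤ p' g) {x y g h : ℝ}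
    (hx : 0 ≤ x) (hxy : x ≤ y) (hg : 0 < g) (hgh : g ≤ h) :
    p g + x * p' g ≤ p h + y * p' h := by
  have hh : 0 < h := hg.trans_le hgh
  have hp'gh : p' g ≤ p' h := hp' hg hh hgh
  have hpgh : p g ≤ p h := hp hg hh hgh
  gcongr
  · exact hp'_nonneg g hg
  · exact hx.trans hxy

theorem mul_lt_mul_of_first_order_conditions {v' p p' : ℝ → ℝ} (hv' : StrictAntiOn v' (Ici 0))
    (hp : MonotoneOn p (Ioi 0)) (hp' : MonotoneOn p' (Ioi 0))
    (hp'_nonneg : ∀ g, 0 < g → 0 ≤ p' g) {m n a b : ℝ} (hm : 0 ≤ m) (hmn : m < n) (hb : 0 < b)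
    (hfoc_a : v' a = p (m * a) + a * p' (m * a))
    (hfoc_b : v' b = p (n * b) + b * p' (n * b)) :
    m * a < n * b := by
  by_contra! hle
  have hnb : 0 < n * b := mul_pos (hm.trans_lt hmn) hb
  have hba : b < a := by nlinarith
  have hv'_lt : v' a < v' b := hv' hb.le (hb.trans hba).le hba
  have hv'_le : v' b ≤ v' a := by
    rw [hfoc_a, hfoc_b]
    exact add_mul_le_add_mul_of_monotoneOn hp hp' hp'_nonneg hb.le hba.le hnb hle
  exact hv'_le.not_gt hv'_lt

theorem statement_13_general
    (v v' : ℝ → ℝ) (p p' : ℝ → ℝ)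
    (hv_deriv : ∀ x, HasDerivAt v (v' x) x)
    (hv_sconcave : StrictConcaveOn ℝ (Ici (0 : ℝ)) v)
    (hp_mono : MonotoneOn p (Ioi (0 : ℝ)))
    (hp'_pos : ∀ g : ℝ, 0 < g → 0 < p' g)
    (hp'_mono : MonotoneOn p' (Ioi (0 : ℝ)))
    (N : ℕ)
    (a b : ℝ) (hb : 0 < b)
    (hfoc_a : v' a = p ((N : ℝ) * a) + a * p' ((N : ℝ) * a))
    (hfoc_b : v' b = p (((N : ℝ) + 1) * b) + b * p' (((N : ℝ) + 1) * b)) :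
    (N : ℝ) * a < ((N : ℝ) + 1) * b := by
  have hv' : deriv v = v' := funext fun x => (hv_deriv x).deriv
  have hv'_anti : StrictAntiOn v' (Ici 0) :=
    hv' ▸ hv_sconcave.strictAntiOn_deriv fun x _ => (hv_deriv x).differentiableAt
  exact mul_lt_mul_of_first_order_conditions hv'_anti hp_mono hp'_mono (fun g hg => (hp'_pos g hg).le)
    N.cast_nonneg (lt_add_one _) hb hfoc_a hfoc_b

/-- With a common strictly concave valuation and a
differentiable, non-decreasing price with positive, non-decreasing derivative,
the symmetric Nash-equilibrium total demand strictly increases with the number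
of consumers: `N·ξ̄_N < (N+1)·ξ̄_{N+1}`. -/
theorem statement_13
    (v v' : ℝ → ℝ) (C p p' : ℝ → ℝ)
    (hv_deriv : ∀ x, HasDerivAt v (v' x) x)
    (hv_sconcave : StrictConcaveOn ℝ (Ici (0 : ℝ)) v)
    (hv_mono : MonotoneOn v (Ici (0 : ℝ)))
    (hv0 : v 0 = 0)
    (hC_diff : DifferentiableOn ℝ C (Ici (0 : ℝ)))
    (hC_sconvex : StrictConvexOn ℝ (Ici (0 : ℝ)) C)
    (hC0 : C 0 = 0)
    (hCpos : ∀ g : ℝ, 0 < g → 0 < C g)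
    (hp : ∀ g : ℝ, 0 < g → p g = C g / g)
    (hp_deriv : ∀ g : ℝ, 0 < g → HasDerivAt p (p' g) g)
    (hp_mono : MonotoneOn p (Ioi (0 : ℝ)))
    (hp'_pos : ∀ g : ℝ, 0 < g → 0 < p' g)
    (hp'_mono : MonotoneOn p' (Ioi (0 : ℝ)))
    (N : ℕ) (hN : 1 ≤ N)
    (a b : ℝ) (ha : 0 < a) (hb : 0 < b)
    (hfoc_a : v' a = p ((N : ℝ) * a) + a * p' ((N : ℝ) * a))
    (hfoc_b : v' b = p (((N : ℝ) + 1) * b) + b * p' (((N : ℝ) + 1) * b)) :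
    (N : ℝ) * a < ((N : ℝ) + 1) * b :=
  statement_13_general v v' p p' hv_deriv hv_sconcave hp_mono hp'_pos hp'_mono N a b hb hfoc_a
    hfoc_b
end

section
/- Assume C'(g) → ∞ as g → ∞ and that there is a constant V with v_i'(0) ≤ V for every consumer, for every population size N. Then equilibrium total demand is bounded uniformly in N: there exist finite constants K_o and K_s, depending only on C and V, such that (a) every profile μ ≥ 0 with ‖μ‖ > 0 satisfying the optimality first-order conditions has C'(‖μ‖) ≤ V, and hence ‖μ‖ ≤ K_o; and (b) every profile ξ ≥ 0 with ‖ξ‖ > 0 satisfying the Nash-equilibrium first-order conditions has p(‖ξ‖) ≤ V, and hence ‖ξ‖ ≤ K_s. -/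
open Finset Set

/-- Derivative of a concave function on `Ici 0` is maximized at `0`. -/
lemma aux_deriv_le_at_zero (v v' : ℝ → ℝ) (hd : ∀ x, HasDerivAt v (v' x) x)
    (hc : ConcaveOn ℝ (Ici (0 : ℝ)) v) {x : ℝ} (hx : 0 < x) : v' x ≤ v' 0 :=
  (hc.le_slope_of_hasDerivAt self_mem_Ici hx.le hx (hd x)).trans
    (hc.slope_le_of_hasDerivAt self_mem_Ici hx.le hx (hd 0))

/-- If `C'(g) → ∞` and every consumer's marginal valuation at
`0` is at most `V`, then equilibrium total demand is bounded uniformly in the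
population size: there exist constants `Ko`, `Ks` (depending only on `C` and
`V`) such that (a) every profile satisfying the optimality first-order
conditions has `C'(‖μ‖) ≤ V` and `‖μ‖ ≤ Ko`, and (b) every profile satisfying
the Nash-equilibrium first-order conditions has `p(‖ξ‖) ≤ V` and `‖ξ‖ ≤ Ks`. -/
theorem statement_14
    (C C' p p' : ℝ → ℝ) (V : ℝ)
    (hC_deriv : ∀ x : ℝ, 0 ≤ x → HasDerivAt C (C' x) x)
    (hC_sconvex : StrictConvexOn ℝ (Ici (0 : ℝ)) C)
    (hC0 : C 0 = 0)
    (hCpos : ∀ g : ℝ, 0 < g → 0 < C g)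
    (hp : ∀ g : ℝ, 0 < g → p g = C g / g)
    (hp_mono : MonotoneOn p (Ioi (0 : ℝ)))
    (hp_deriv : ∀ g : ℝ, 0 < g → HasDerivAt p (p' g) g)
    (hp'_nonneg : ∀ g : ℝ, 0 < g → 0 ≤ p' g)
    (hC'_top : Filter.Tendsto C' Filter.atTop Filter.atTop) :
    ∃ Ko Ks : ℝ,
      -- (a) bound for optimal profiles, uniformly over populations
      (∀ (N : ℕ) (v v' : Fin N → ℝ → ℝ),
        (∀ i x, HasDerivAt (v i) (v' i x) x) →
        (∀ i, ConcaveOn ℝ (Ici (0 : ℝ)) (v i)) →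
        (∀ i, MonotoneOn (v i) (Ici (0 : ℝ))) →
        (∀ i, v i 0 = 0) →
        (∀ i, v' i 0 ≤ V) →
        ∀ μ : Fin N → ℝ, (∀ i, 0 ≤ μ i) → 0 < ∑ i, μ i →
          (∀ i, v' i (μ i) ≤ C' (∑ j, μ j)) →
          (∀ i, 0 < μ i → v' i (μ i) = C' (∑ j, μ j)) →
          C' (∑ i, μ i) ≤ V ∧ (∑ i, μ i) ≤ Ko) ∧
      -- (b) bound for Nash-equilibrium profiles, uniformly over populations
      (∀ (N : ℕ) (v v' : Fin N → ℝ → ℝ),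
        (∀ i x, HasDerivAt (v i) (v' i x) x) →
        (∀ i, ConcaveOn ℝ (Ici (0 : ℝ)) (v i)) →
        (∀ i, MonotoneOn (v i) (Ici (0 : ℝ))) →
        (∀ i, v i 0 = 0) →
        (∀ i, v' i 0 ≤ V) →
        ∀ ξ : Fin N → ℝ, (∀ i, 0 ≤ ξ i) → 0 < ∑ i, ξ i →
          (∀ i, v' i (ξ i) ≤ p (∑ j, ξ j) + ξ i * p' (∑ j, ξ j)) →
          (∀ i, 0 < ξ i → v' i (ξ i) = p (∑ j, ξ j) + ξ i * p' (∑ j, ξ j)) →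
          p (∑ i, ξ i) ≤ V ∧ (∑ i, ξ i) ≤ Ks) := by
  obtain ⟨M, hM⟩ := Filter.eventually_atTop.mp (hC'_top.eventually_ge_atTop (V + 1))
  obtain ⟨M2, hM2⟩ := Filter.eventually_atTop.mp (hC'_top.eventually_ge_atTop (2 * V + 1))
  refine ⟨M, 2 * M2, ?_, ?_⟩
  · intro N v v' hvd hvc _ _ hv'0 μ hμnn hμpos hle heq
    obtain ⟨i, hi⟩ : ∃ i, 0 < μ i := by
      by_contra h
      push_neg at h
      exact absurd (Finset.sum_nonpos fun i _ => h i) (not_le.mpr hμpos)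
    have hCV : C' (∑ j, μ j) ≤ V := by
      calc C' (∑ j, μ j) = v' i (μ i) := (heq i hi).symm
        _ ≤ v' i 0 := aux_deriv_le_at_zero (v i) (v' i) (hvd i) (hvc i) hi
        _ ≤ V := hv'0 i
    refine ⟨hCV, ?_⟩
    by_contra h
    push_neg at h
    have := hM _ h.le
    linarith
  · intro N v v' hvd hvc _ _ hv'0 ξ hξnn hξpos hle heq
    obtain ⟨i, hi⟩ : ∃ i, 0 < ξ i := by
      by_contra h
      push_neg at h
      exact absurd (Finset.sum_nonpos fun i _ => h i) (not_le.mpr hξpos)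
    have hpV : p (∑ j, ξ j) ≤ V := by
      have h1 : p (∑ j, ξ j) ≤ p (∑ j, ξ j) + ξ i * p' (∑ j, ξ j) :=
        le_add_of_nonneg_right (mul_nonneg (hξnn i) (hp'_nonneg _ hξpos))
      calc p (∑ j, ξ j) ≤ v' i (ξ i) := by rw [heq i hi]; exact h1
        _ ≤ v' i 0 := aux_deriv_le_at_zero (v i) (v' i) (hvd i) (hvc i) hi
        _ ≤ V := hv'0 i
    refine ⟨hpV, ?_⟩
    by_contra h
    push_neg at h
    set s := ∑ j, ξ j with hs
    set t := s / 2 with ht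
    have hts : t < s := by
      have : 0 < s := hξpos
      simp only [ht]; linarith
    have htpos : 0 < t := by positivity
    have hMt : M2 ≤ t := by simp only [ht]; linarith
    have hC't : 2 * V + 1 ≤ C' t := hM2 _ hMt
    have hslope : C' t ≤ slope C t s :=
      hC_sconvex.convexOn.le_slope_of_hasDerivAt htpos.le hξpos.le hts (hC_deriv t htpos.le)
    rw [show slope C t s = (C s - C t) / (s - t) by
        rw [slope_comm, slope_def_field, ← neg_sub (C s) (C t), ← neg_sub s t, neg_div_neg_eq],
      show s - t = t by simp only [ht]; ring] at hslope
    have h2 : C' t * t ≤ C s - C t := (le_div_iff₀ htpos).mp hslope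
    have h3 : C s ≤ V * (2 * t) := by
      have h4 := hpV
      rw [hp s hξpos] at h4
      have h5 := (div_le_iff₀ hξpos).mp h4
      have h6 : V * (2 * t) = V * s := by rw [ht]; ring
      linarith
    have hCt : 0 < C t := hCpos t htpos
    linarith [mul_le_mul_of_nonneg_right hC't htpos.le]
end

section
/- Assume C'(g) → ∞ as g → ∞ and all consumers share a common valuation v that is differentiable, concave and non-decreasing with v'(0) finite. For each N ≥ 1, let ξ̄_N > 0 satisfy the symmetric Nash-equilibrium condition v'(ξ̄_N) = p(N·ξ̄_N) + ξ̄_N·p'(N·ξ̄_N), and let μ̄_N > 0 satisfy the symmetric optimality condition v'(μ̄_N) = C'(N·μ̄_N). Then the individual demands vanish as the population grows: ξ̄_N → 0 and μ̄_N → 0 as N → ∞. -/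
open Finset Set

/-- Squeeze helper: if `0 < f N ≤ K / N` for all `N ≥ 1`, then `f → 0`. -/
lemma aux_squeeze (f : ℕ → ℝ) (K : ℝ)
    (h : ∀ N : ℕ, 1 ≤ N → 0 < f N ∧ f N ≤ K / N) :
    Filter.Tendsto f Filter.atTop (nhds 0) := by
  refine tendsto_of_tendsto_of_tendsto_of_le_of_le'
    (tendsto_const_nhds : Filter.Tendsto (fun _ : ℕ => (0:ℝ)) _ _)
    (tendsto_const_div_atTop_nhds_zero_nat K) ?_ ?_
  · filter_upwards [Filter.eventually_ge_atTop 1] with N hN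
    exact (h N hN).1.le
  · filter_upwards [Filter.eventually_ge_atTop 1] with N hN
    exact (h N hN).2

/-- If `C'(g) → ∞` and all consumers share a common valuation
`v`, then the symmetric Nash demands `ξ̄_N` and symmetric optimal demands
`μ̄_N` vanish as the population grows: `ξ̄_N → 0` and `μ̄_N → 0`. -/
theorem statement_15
    (v v' : ℝ → ℝ) (C C' p p' : ℝ → ℝ)
    (hv_deriv : ∀ x, HasDerivAt v (v' x) x)
    (hv_concave : ConcaveOn ℝ (Ici (0 : ℝ)) v)
    (hv_mono : MonotoneOn v (Ici (0 : ℝ)))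
    (hv0 : v 0 = 0)
    (hC_deriv : ∀ x : ℝ, 0 ≤ x → HasDerivAt C (C' x) x)
    (hC_sconvex : StrictConvexOn ℝ (Ici (0 : ℝ)) C)
    (hC0 : C 0 = 0)
    (hCpos : ∀ g : ℝ, 0 < g → 0 < C g)
    (hp : ∀ g : ℝ, 0 < g → p g = C g / g)
    (hp_mono : MonotoneOn p (Ioi (0 : ℝ)))
    (hp_deriv : ∀ g : ℝ, 0 < g → HasDerivAt p (p' g) g)
    (hp'_nonneg : ∀ g : ℝ, 0 < g → 0 ≤ p' g)
    (hC'_eq : ∀ g : ℝ, 0 < g → C' g = p g + g * p' g)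
    (hC'_top : Filter.Tendsto C' Filter.atTop Filter.atTop)
    (ξ μ : ℕ → ℝ)
    (hξ_pos : ∀ N : ℕ, 1 ≤ N → 0 < ξ N)
    (hμ_pos : ∀ N : ℕ, 1 ≤ N → 0 < μ N)
    (hξ_eq : ∀ N : ℕ, 1 ≤ N →
        v' (ξ N) = p ((N : ℝ) * ξ N) + ξ N * p' ((N : ℝ) * ξ N))
    (hμ_eq : ∀ N : ℕ, 1 ≤ N → v' (μ N) = C' ((N : ℝ) * μ N)) :
    Filter.Tendsto ξ Filter.atTop (nhds 0) ∧
    Filter.Tendsto μ Filter.atTop (nhds 0) := by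
  set M := v' 0 with hM
  -- v' is bounded above by v' 0 on positives
  have hv'_le : ∀ x : ℝ, 0 < x → v' x ≤ M := by
    intro x hx
    have h1 : v' x ≤ slope v 0 x :=
      hv_concave.le_slope_of_hasDerivAt (mem_Ici.mpr le_rfl) (mem_Ici.mpr hx.le) hx (hv_deriv x)
    have h2 : slope v 0 x ≤ v' 0 :=
      hv_concave.slope_le_of_hasDerivAt (mem_Ici.mpr le_rfl) (mem_Ici.mpr hx.le) hx (hv_deriv 0)
    exact h1.trans h2
  -- tangent bound: p g ≥ C'(g/2)/2 for g > 0
  have hp_lb : ∀ g : ℝ, 0 < g → C' (g / 2) / 2 ≤ p g := by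
    intro g hg
    have hg2 : 0 < g / 2 := by linarith
    have hlt : g / 2 < g := by linarith
    have hslope : C' (g / 2) ≤ slope C (g / 2) g :=
      hC_sconvex.convexOn.le_slope_of_hasDerivAt hg2.le hg.le hlt (hC_deriv _ hg2.le)
    rw [slope_def_field] at hslope
    have hCg2 : 0 < C (g / 2) := hCpos _ hg2
    have hden : g - g / 2 = g / 2 := by ring
    rw [hden] at hslope
    have : C' (g / 2) * (g / 2) ≤ C g - C (g / 2) := by
      have := (le_div_iff₀ hg2).mp hslope
      linarith
    have hCbound : C' (g / 2) * (g / 2) ≤ C g := by linarith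
    rw [hp g hg]
    rw [div_le_div_iff₀ (by norm_num) hg]
    nlinarith
  -- C'(g/2)/2 → ∞
  have htop2 : Filter.Tendsto (fun g : ℝ => C' (g / 2) / 2) Filter.atTop Filter.atTop := by
    apply Filter.Tendsto.atTop_div_const (by norm_num)
    exact hC'_top.comp (Filter.tendsto_id.atTop_div_const (by norm_num))
  -- bound for ξ
  obtain ⟨G₁, hG₁⟩ := (Filter.tendsto_atTop.mp htop2 (M + 1)).exists_forall_of_atTop
  obtain ⟨G₂, hG₂⟩ := (Filter.tendsto_atTop.mp hC'_top (M + 1)).exists_forall_of_atTop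
  constructor
  · apply aux_squeeze ξ G₁
    intro N hN
    refine ⟨hξ_pos N hN, ?_⟩
    have hNpos : (0:ℝ) < N := by exact_mod_cast hN
    have hNξpos : 0 < (N : ℝ) * ξ N := mul_pos hNpos (hξ_pos N hN)
    have hlt : (N : ℝ) * ξ N < G₁ := by
      by_contra hcon
      push_neg at hcon
      have hpg : M + 1 ≤ C' (((N : ℝ) * ξ N) / 2) / 2 := hG₁ _ hcon
      have : M + 1 ≤ p ((N : ℝ) * ξ N) := hpg.trans (hp_lb _ hNξpos)
      have hle : v' (ξ N) ≤ M := hv'_le _ (hξ_pos N hN)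
      have hnn : 0 ≤ ξ N * p' ((N : ℝ) * ξ N) :=
        mul_nonneg (hξ_pos N hN).le (hp'_nonneg _ hNξpos)
      have := hξ_eq N hN
      linarith
    calc ξ N = (N : ℝ) * ξ N / N := by field_simp
    _ ≤ G₁ / N := by
        gcongr
  · apply aux_squeeze μ G₂
    intro N hN
    refine ⟨hμ_pos N hN, ?_⟩
    have hNpos : (0:ℝ) < N := by exact_mod_cast hN
    have hNμpos : 0 < (N : ℝ) * μ N := mul_pos hNpos (hμ_pos N hN)
    have hlt : (N : ℝ) * μ N < G₂ := by
      by_contra hcon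
      push_neg at hcon
      have : M + 1 ≤ C' ((N : ℝ) * μ N) := hG₂ _ hcon
      have hle : v' (μ N) ≤ M := hv'_le _ (hμ_pos N hN)
      have := hμ_eq N hN
      linarith
    calc μ N = (N : ℝ) * μ N / N := by field_simp
    _ ≤ G₂ / N := by
        gcongr
end

section
/- Let μ ≥ 0 satisfy the optimality first-order conditions with ‖μ‖ > 0, and let p be differentiable at ‖μ‖. Then the aggregate valuation at the optimum satisfies Σ_i v_i(μ_i) ≥ ‖μ‖·p(‖μ‖) + ‖μ‖²·p'(‖μ‖). -/
open Finset Set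

/-!
By concavity and `v i 0 = 0`, the tangent line of `v i` at `μ i` passes above the origin, so
`v i (μ i) ≥ μ i * v' i (μ i)`; by the first-order conditions the right side is `μ i * C' ‖μ‖`
(both sides vanish when `μ i = 0`). Summing gives `∑ i, v i (μ i) ≥ ‖μ‖ * C' ‖μ‖`, and
`C' = p + g * p'` turns this into the claim.
-/

lemma ConcaveOn.le_add_mul_sub_of_hasDerivAt {s : Set ℝ} {f : ℝ → ℝ} {f' x y : ℝ}
    (hf : ConcaveOn ℝ s f) (hx : x ∈ s) (hy : y ∈ s) (hf' : HasDerivAt f f' x) :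
    f y ≤ f x + f' * (y - x) := by
  rcases lt_trichotomy y x with hyx | rfl | hxy
  · have h := hf.le_slope_of_hasDerivAt hy hx hyx hf'
    rw [slope_def_field, le_div_iff₀ (sub_pos.mpr hyx)] at h
    linarith
  · simp
  · have h := hf.slope_le_of_hasDerivAt hx hy hxy hf'
    rw [slope_def_field, div_le_iff₀ (sub_pos.mpr hxy)] at h
    linarith

lemma ConcaveOn.mul_le_of_hasDerivAt_of_map_zero {s : Set ℝ} {f : ℝ → ℝ} {f' x : ℝ}
    (hf : ConcaveOn ℝ s f) (h0 : (0 : ℝ) ∈ s) (hx : x ∈ s) (hf0 : f 0 = 0)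
    (hf' : HasDerivAt f f' x) :
    x * f' ≤ f x := by
  have h := hf.le_add_mul_sub_of_hasDerivAt hx h0 hf'
  rw [hf0] at h
  linarith

theorem statement_16_general
    (N : ℕ) (v v' : Fin N → ℝ → ℝ) (C' p p' : ℝ → ℝ)
    (hv_deriv : ∀ i x, HasDerivAt (v i) (v' i x) x)
    (hv_concave : ∀ i, ConcaveOn ℝ (Ici (0 : ℝ)) (v i))
    (hv0 : ∀ i, v i 0 = 0)
    (μ : Fin N → ℝ)
    (hμ_nonneg : ∀ i, 0 ≤ μ i)
    (hC'_eq : C' (∑ i, μ i) = p (∑ i, μ i) + (∑ i, μ i) * p' (∑ i, μ i))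
    (hμ_eq : ∀ i, 0 < μ i → v' i (μ i) = C' (∑ j, μ j)) :
    (∑ i, μ i) * p (∑ i, μ i) + (∑ i, μ i) ^ 2 * p' (∑ i, μ i)
      ≤ ∑ i, v i (μ i) := by
  set S := ∑ i, μ i
  have hmarginal : ∀ i, μ i * C' S = μ i * v' i (μ i) := fun i => by
    rcases (hμ_nonneg i).eq_or_lt with h0 | hpos
    · simp [← h0]
    · rw [hμ_eq i hpos]
  have htangent : ∀ i, μ i * v' i (μ i) ≤ v i (μ i) := fun i =>
    (hv_concave i).mul_le_of_hasDerivAt_of_map_zero self_mem_Ici (hμ_nonneg i) (hv0 i)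
      (hv_deriv i (μ i))
  calc S * p S + S ^ 2 * p' S = S * C' S := by rw [hC'_eq]; ring
    _ = ∑ i, μ i * v' i (μ i) := by rw [sum_mul]; exact sum_congr rfl fun i _ => hmarginal i
    _ ≤ ∑ i, v i (μ i) := sum_le_sum fun i _ => htangent i

/-- At a profile `μ` satisfying the optimality first-order
conditions with `‖μ‖ > 0` (and `p` differentiable at `‖μ‖`), the aggregate
valuation satisfies `Σ_i v_i(μ_i) ≥ ‖μ‖·p(‖μ‖) + ‖μ‖²·p'(‖μ‖)`. -/
theorem statement_16
    (N : ℕ) (v v' : Fin N → ℝ → ℝ) (C C' p p' : ℝ → ℝ)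
    (hv_deriv : ∀ i x, HasDerivAt (v i) (v' i x) x)
    (hv_concave : ∀ i, ConcaveOn ℝ (Ici (0 : ℝ)) (v i))
    (hv_mono : ∀ i, MonotoneOn (v i) (Ici (0 : ℝ)))
    (hv0 : ∀ i, v i 0 = 0)
    (hC_deriv : ∀ x : ℝ, 0 ≤ x → HasDerivAt C (C' x) x)
    (hC_sconvex : StrictConvexOn ℝ (Ici (0 : ℝ)) C)
    (hC0 : C 0 = 0)
    (hCpos : ∀ g : ℝ, 0 < g → 0 < C g)
    (hp : ∀ g : ℝ, 0 < g → p g = C g / g)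
    (μ : Fin N → ℝ)
    (hμ_nonneg : ∀ i, 0 ≤ μ i)
    (hμ_total : 0 < ∑ i, μ i)
    (hp_deriv : HasDerivAt p (p' (∑ i, μ i)) (∑ i, μ i))
    (hC'_eq : C' (∑ i, μ i) = p (∑ i, μ i) + (∑ i, μ i) * p' (∑ i, μ i))
    (hμ_le : ∀ i, v' i (μ i) ≤ C' (∑ j, μ j))
    (hμ_eq : ∀ i, 0 < μ i → v' i (μ i) = C' (∑ j, μ j)) :
    (∑ i, μ i) * p (∑ i, μ i) + (∑ i, μ i) ^ 2 * p' (∑ i, μ i)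
      ≤ ∑ i, v i (μ i) :=
  statement_16_general N v v' C' p p' hv_deriv hv_concave hv0 μ hμ_nonneg hC'_eq hμ_eq
end

section
/- Let ξ ≥ 0 satisfy the Nash-equilibrium first-order conditions with ‖ξ‖ > 0, with p differentiable at ‖ξ‖ and p'(‖ξ‖) ≥ 0, and let μ ∈ ℝ^N be any profile with μ_i ≥ 0 for all i. Then Σ_i v_i(ξ_i) ≥ Σ_i v_i(μ_i) + (‖ξ‖ − ‖μ‖)·p(‖ξ‖) + p'(‖ξ‖)·Σ_i ξ_i·(ξ_i − μ_i). -/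
open Finset Set

lemma tangent_le_concave {S : Set ℝ} {f : ℝ → ℝ} {f'x x y : ℝ}
    (hf : ConcaveOn ℝ S f) (hx : x ∈ S) (hy : y ∈ S)
    (hd : HasDerivAt f f'x x) : f y ≤ f x + f'x * (y - x) := by
  rcases lt_trichotomy x y with h | h | h
  · have := hf.slope_le_of_hasDerivAt hx hy h hd
    rw [slope_def_field, div_le_iff₀ (by linarith)] at this
    · linarith
  · simp [h]
  · have := hf.le_slope_of_hasDerivAt hy hx h hd
    rw [slope_def_field, le_div_iff₀ (by linarith)] at this
    linarith

/-- At a profile `ξ` satisfying the Nash-equilibrium first-order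
conditions with `‖ξ‖ > 0` and `p'(‖ξ‖) ≥ 0`, for any non-negative profile `μ`,
`Σ_i v_i(ξ_i) ≥ Σ_i v_i(μ_i) + (‖ξ‖ − ‖μ‖)·p(‖ξ‖) + p'(‖ξ‖)·Σ_i ξ_i(ξ_i − μ_i)`. -/
theorem statement_17
    (N : ℕ) (v v' : Fin N → ℝ → ℝ) (C p p' : ℝ → ℝ)
    (hv_deriv : ∀ i x, HasDerivAt (v i) (v' i x) x)
    (hv_concave : ∀ i, ConcaveOn ℝ (Ici (0 : ℝ)) (v i))
    (hv_mono : ∀ i, MonotoneOn (v i) (Ici (0 : ℝ)))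
    (hv0 : ∀ i, v i 0 = 0)
    (hC_diff : DifferentiableOn ℝ C (Ici (0 : ℝ)))
    (hC_sconvex : StrictConvexOn ℝ (Ici (0 : ℝ)) C)
    (hC0 : C 0 = 0)
    (hCpos : ∀ g : ℝ, 0 < g → 0 < C g)
    (hp : ∀ g : ℝ, 0 < g → p g = C g / g)
    (ξ : Fin N → ℝ)
    (hξ_nonneg : ∀ i, 0 ≤ ξ i)
    (hξ_total : 0 < ∑ i, ξ i)
    (hp_deriv : HasDerivAt p (p' (∑ i, ξ i)) (∑ i, ξ i))
    (hp'_nonneg : 0 ≤ p' (∑ i, ξ i))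
    (hξ_le : ∀ i, v' i (ξ i) ≤ p (∑ j, ξ j) + ξ i * p' (∑ j, ξ j))
    (hξ_eq : ∀ i, 0 < ξ i → v' i (ξ i) = p (∑ j, ξ j) + ξ i * p' (∑ j, ξ j))
    (μ : Fin N → ℝ)
    (hμ_nonneg : ∀ i, 0 ≤ μ i) :
    (∑ i, v i (μ i)) + ((∑ i, ξ i) - ∑ i, μ i) * p (∑ i, ξ i)
        + p' (∑ i, ξ i) * (∑ i, ξ i * (ξ i - μ i))
      ≤ ∑ i, v i (ξ i) := by
  set P := p (∑ i, ξ i) with hP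
  set P' := p' (∑ i, ξ i) with hP'
  have key : ∀ i, v i (μ i) + (ξ i - μ i) * P + P' * (ξ i * (ξ i - μ i)) ≤ v i (ξ i) := by
    intro i
    have htan : v i (μ i) ≤ v i (ξ i) + v' i (ξ i) * (μ i - ξ i) :=
      tangent_le_concave (hv_concave i) (hξ_nonneg i) (hμ_nonneg i) (hv_deriv i (ξ i))
    have hstep : v' i (ξ i) * (μ i - ξ i) ≤ (P + ξ i * P') * (μ i - ξ i) := by
      rcases (hξ_nonneg i).lt_or_eq with h | h
      · rw [hξ_eq i h]
      · rw [← h]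
        have h1 := hξ_le i
        rw [← h] at h1
        nlinarith [hμ_nonneg i]
    nlinarith
  have hsum := Finset.sum_le_sum (fun i (_ : i ∈ Finset.univ) => key i)
  rw [Finset.sum_add_distrib, Finset.sum_add_distrib, ← Finset.sum_mul, ← Finset.mul_sum,
    Finset.sum_sub_distrib] at hsum
  linarith
end

section
/- Suppose the price is linear, p(g) = β·g + b with β > 0 and b ≥ 0. Let μ ≥ 0 satisfy the optimality first-order conditions with ‖μ‖ > 0, and let ξ ≥ 0 satisfy the Nash-equilibrium first-order conditions. Assume in addition that μ_i ≤ ξ_i for every i, and let m = min_i ξ_i. Then the optimal customer surplus is positive, Σ_i v_i(μ_i) − ‖μ‖·p(‖μ‖) ≥ β·‖μ‖² > 0, and the efficiency ratio is bounded below by r(ξ, μ) ≥ (‖μ‖² + (‖ξ‖ − ‖μ‖)·(m − ‖μ‖)) / ‖μ‖². -/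
open Finset Set

lemma concave_grad_bounds (f f' : ℝ → ℝ) (hd : ∀ x, HasDerivAt f (f' x) x)
    (hc : ConcaveOn ℝ (Ici (0 : ℝ)) f) {x y : ℝ} (hx : 0 ≤ x) (hxy : x < y) :
    f' y * (y - x) ≤ f y - f x ∧ f y - f x ≤ f' x * (y - x) := by
  have hyS : y ∈ Ici (0 : ℝ) := le_of_lt (lt_of_le_of_lt hx hxy)
  have hxS : x ∈ Ici (0 : ℝ) := hx
  have h1 := hc.le_slope_of_hasDerivAt hxS hyS hxy (hd y)
  have h2 := hc.slope_le_of_hasDerivAt hxS hyS hxy (hd x)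
  rw [slope_def_field] at h1 h2
  have hyx : (0:ℝ) < y - x := sub_pos.2 hxy
  constructor
  · have := (le_div_iff₀ hyx).mp h1
    linarith
  · have := (div_le_iff₀ hyx).mp h2
    linarith

/-- With a linear price `p(g) = β·g + b` (`β > 0`, `b ≥ 0`),
a profile `μ` satisfying the optimality first-order conditions with `‖μ‖ > 0`,
a profile `ξ` satisfying the Nash-equilibrium first-order conditions with
`μ_i ≤ ξ_i` for every `i`, and `m = min_i ξ_i`: the optimal customer surplus
is at least `β·‖μ‖² > 0`, and the efficiency ratio is bounded below by
`(‖μ‖² + (‖ξ‖ − ‖μ‖)·(m − ‖μ‖))/‖μ‖²`. -/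
theorem statement_18
    (N : ℕ) (β b : ℝ) (hβ : 0 < β) (hb : 0 ≤ b)
    (v v' : Fin N → ℝ → ℝ)
    (hv_deriv : ∀ i x, HasDerivAt (v i) (v' i x) x)
    (hv_concave : ∀ i, ConcaveOn ℝ (Ici (0 : ℝ)) (v i))
    (hv_mono : ∀ i, MonotoneOn (v i) (Ici (0 : ℝ)))
    (hv0 : ∀ i, v i 0 = 0)
    (μ ξ : Fin N → ℝ)
    (hμ_nonneg : ∀ i, 0 ≤ μ i)
    (hμ_total : 0 < ∑ i, μ i)
    -- optimality FOC with C'(g) = 2βg + b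
    (hμ_le : ∀ i, v' i (μ i) ≤ 2 * β * (∑ j, μ j) + b)
    (hμ_eq : ∀ i, 0 < μ i → v' i (μ i) = 2 * β * (∑ j, μ j) + b)
    (hξ_nonneg : ∀ i, 0 ≤ ξ i)
    -- Nash-equilibrium FOC with p(g) = βg + b, p'(g) = β
    (hξ_le : ∀ i, v' i (ξ i) ≤ (β * (∑ j, ξ j) + b) + ξ i * β)
    (hξ_eq : ∀ i, 0 < ξ i → v' i (ξ i) = (β * (∑ j, ξ j) + b) + ξ i * β)
    (hle : ∀ i, μ i ≤ ξ i)
    (m : ℝ) (hm : IsLeast (Set.range ξ) m) :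
    (β * (∑ i, μ i) ^ 2 ≤ (∑ i, v i (μ i)) - (∑ i, μ i) * (β * (∑ i, μ i) + b)) ∧
    0 < β * (∑ i, μ i) ^ 2 ∧
    ((∑ i, μ i) ^ 2 + ((∑ i, ξ i) - ∑ i, μ i) * (m - ∑ i, μ i)) / (∑ i, μ i) ^ 2
      ≤ ((∑ i, v i (ξ i)) - (∑ i, ξ i) * (β * (∑ i, ξ i) + b)) /
        ((∑ i, v i (μ i)) - (∑ i, μ i) * (β * (∑ i, μ i) + b)) := by
  set M := ∑ i, μ i with hM
  set X := ∑ i, ξ i with hX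
  have hMX : M ≤ X := Finset.sum_le_sum (fun i _ => hle i)
  have hm_le : ∀ i, m ≤ ξ i := fun i => hm.2 ⟨i, rfl⟩
  -- Part 1: pointwise lower bound on v i (μ i)
  have h1 : ∀ i, (2 * β * M + b) * μ i ≤ v i (μ i) := by
    intro i
    rcases eq_or_lt_of_le (hμ_nonneg i) with h0 | h0
    · rw [← h0, hv0 i, mul_zero]
    · have hg := (concave_grad_bounds (v i) (v' i) (hv_deriv i) (hv_concave i) le_rfl h0).1
      rw [hv0 i] at hg
      rw [hμ_eq i h0] at hg
      linarith
  have hS1 : (2 * β * M + b) * M ≤ ∑ i, v i (μ i) := by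
    calc (2 * β * M + b) * M = ∑ i, (2 * β * M + b) * μ i := by rw [← Finset.mul_sum]
    _ ≤ ∑ i, v i (μ i) := Finset.sum_le_sum (fun i _ => h1 i)
  have hDen : β * M ^ 2 ≤ (∑ i, v i (μ i)) - M * (β * M + b) := by nlinarith
  have hDenpos : 0 < β * M ^ 2 := by positivity
  refine ⟨hDen, hDenpos, ?_⟩
  -- Part 2: pointwise bound for ξ vs μ
  have h2 : ∀ i, ((β * X + b) + ξ i * β) * (ξ i - μ i) ≤ v i (ξ i) - v i (μ i) := by
    intro i
    rcases eq_or_lt_of_le (hle i) with h0 | h0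
    · rw [← h0]; simp
    · have hξpos : 0 < ξ i := lt_of_le_of_lt (hμ_nonneg i) h0
      have hg := (concave_grad_bounds (v i) (v' i) (hv_deriv i) (hv_concave i) (hμ_nonneg i) h0).1
      rw [hξ_eq i hξpos] at hg
      linarith
  have hS2 : (β * X + b) * (X - M) + β * (∑ i, ξ i * (ξ i - μ i))
      ≤ (∑ i, v i (ξ i)) - ∑ i, v i (μ i) := by
    have hs := Finset.sum_le_sum (fun i (_ : i ∈ Finset.univ) => h2 i)
    rw [Finset.sum_sub_distrib] at hs
    have he : ∑ i, ((β * X + b) + ξ i * β) * (ξ i - μ i)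
        = (β * X + b) * (X - M) + β * (∑ i, ξ i * (ξ i - μ i)) := by
      calc ∑ i, ((β * X + b) + ξ i * β) * (ξ i - μ i)
          = ∑ i, ((β * X + b) * (ξ i - μ i) + β * (ξ i * (ξ i - μ i))) :=
            Finset.sum_congr rfl fun i _ => by ring
        _ = (β * X + b) * (∑ i, (ξ i - μ i)) + β * ∑ i, ξ i * (ξ i - μ i) := by
            rw [Finset.sum_add_distrib, ← Finset.mul_sum, ← Finset.mul_sum]
        _ = (β * X + b) * (X - M) + β * ∑ i, ξ i * (ξ i - μ i) := by
            rw [Finset.sum_sub_distrib, hX, hM]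
    rw [he] at hs
    linarith
  have hS3 : m * (X - M) ≤ ∑ i, ξ i * (ξ i - μ i) := by
    calc m * (X - M) = ∑ i, m * (ξ i - μ i) := by
          rw [← Finset.mul_sum, Finset.sum_sub_distrib]
      _ ≤ ∑ i, ξ i * (ξ i - μ i) := by
          refine Finset.sum_le_sum (fun i _ => ?_)
          exact mul_le_mul_of_nonneg_right (hm_le i) (sub_nonneg.2 (hle i))
  -- m ≤ 2M - X
  have hmM : m ≤ 2 * M - X := by
    obtain ⟨i, hi⟩ : ∃ i, 0 < μ i := by
      by_contra h
      push_neg at h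
      have : M ≤ 0 := Finset.sum_nonpos (fun i _ => h i)
      linarith
    have hξpos : 0 < ξ i := lt_of_lt_of_le hi (hle i)
    have hanti : v' i (ξ i) ≤ v' i (μ i) := by
      rcases eq_or_lt_of_le (hle i) with h0 | h0
      · rw [h0]
      · have hg := concave_grad_bounds (v i) (v' i) (hv_deriv i) (hv_concave i) (hμ_nonneg i) h0
        nlinarith [sub_pos.2 h0, hg.1, hg.2]
    rw [hξ_eq i hξpos, hμ_eq i hi] at hanti
    have : X + ξ i ≤ 2 * M := by nlinarith
    have := hm_le i
    linarith
  -- combine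
  have hNum : ((∑ i, v i (μ i)) - M * (β * M + b)) + β * (X - M) * (m - M)
      ≤ (∑ i, v i (ξ i)) - X * (β * X + b) := by nlinarith
  have hDpos : 0 < (∑ i, v i (μ i)) - M * (β * M + b) := lt_of_lt_of_le hDenpos hDen
  rw [div_le_div_iff₀ (by positivity) hDpos]
  have hfac : (X - M) * (m - M) ≤ 0 :=
    mul_nonpos_of_nonneg_of_nonpos (by linarith) (by linarith)
  nlinarith [mul_nonneg (le_of_lt hDenpos) (le_of_lt hDpos)]
end
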